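/- arXiv:q-alg/9610004 — 5 statements merged into one kernel-verified Lean document; each statement's English description precedes it below -/
import Mathlib

section
/- In U, define η₊ := −θ₊L⁻¹ and e := v⁻¹K⁻¹(X₊θ₊ − qθ₊X₊)L⁻¹ (equivalently e = K⁻¹(η₊X₊ − v⁻¹X₊η₊)). Then e² = 0 and η₊e = −q⁻¹eη₊. (Thus the remaining fermionic quantum-plane relations of ℂ_q^{0|2} are implied by the relations of U, the hypothesis q² ≠ −1 being used.) -/
open scoped TensorProduct

namespace DoubleBos

/-- Generators of the algebra `U`: `K, K⁻¹, L, L⁻¹, X₊, X₋, θ₊, θ₋`. -/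
inductive Gen : Type
  | K | Kinv | L | Linv | Xp | Xm | Tp | Tm
  deriving DecidableEq

/-- The generators viewed inside the free algebra. -/
noncomputable abbrev gg (k : Type) [Field k] (x : Gen) : FreeAlgebra k Gen :=
  FreeAlgebra.ι k x

/-- The defining relations of `U` (with `q = v²`, `i² = -1`). -/
inductive Rel (k : Type) [Field k] (v i : k) :
    FreeAlgebra k Gen → FreeAlgebra k Gen → Prop
  | KKinv : Rel k v i (gg k .K * gg k .Kinv) 1
  | KinvK : Rel k v i (gg k .Kinv * gg k .K) 1
  | LLinv : Rel k v i (gg k .L * gg k .Linv) 1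
  | LinvL : Rel k v i (gg k .Linv * gg k .L) 1
  | KL : Rel k v i (gg k .K * gg k .L) (gg k .L * gg k .K)
  | KXp : Rel k v i (gg k .K * gg k .Xp) ((v ^ 2) • (gg k .Xp * gg k .K))
  | KXm : Rel k v i (gg k .K * gg k .Xm) ((v ^ 2)⁻¹ • (gg k .Xm * gg k .K))
  | LXp : Rel k v i (gg k .L * gg k .Xp) (v⁻¹ • (gg k .Xp * gg k .L))
  | LXm : Rel k v i (gg k .L * gg k .Xm) (v • (gg k .Xm * gg k .L))
  | KTp : Rel k v i (gg k .K * gg k .Tp) (v⁻¹ • (gg k .Tp * gg k .K))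
  | KTm : Rel k v i (gg k .K * gg k .Tm) (v • (gg k .Tm * gg k .K))
  | LTp : Rel k v i (gg k .L * gg k .Tp) (i • (gg k .Tp * gg k .L))
  | LTm : Rel k v i (gg k .L * gg k .Tm) ((-i) • (gg k .Tm * gg k .L))
  | XpXm : Rel k v i (gg k .Xp * gg k .Xm - gg k .Xm * gg k .Xp)
      ((v ^ 2 - (v ^ 2)⁻¹)⁻¹ • (gg k .K * gg k .K - gg k .Kinv * gg k .Kinv))
  | TpTm : Rel k v i (gg k .Tp * gg k .Tm - gg k .Tm * gg k .Tp)
      ((v ^ 2 - (v ^ 2)⁻¹)⁻¹ • (gg k .L * gg k .L - gg k .Linv * gg k .Linv))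
  | TpXm : Rel k v i (gg k .Tp * gg k .Xm) (gg k .Xm * gg k .Tp)
  | XpTm : Rel k v i (gg k .Xp * gg k .Tm) (gg k .Tm * gg k .Xp)
  | TpTp : Rel k v i (gg k .Tp * gg k .Tp) 0
  | TmTm : Rel k v i (gg k .Tm * gg k .Tm) 0
  | SerreP : Rel k v i
      ((gg k .Xp * gg k .Tp - (v ^ 2) • (gg k .Tp * gg k .Xp)) * gg k .Xp)
      ((v ^ 2) • (gg k .Xp * (gg k .Xp * gg k .Tp - (v ^ 2) • (gg k .Tp * gg k .Xp))))
  | SerreM : Rel k v i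
      ((gg k .Xm * gg k .Tm - (v ^ 2) • (gg k .Tm * gg k .Xm)) * gg k .Xm)
      ((v ^ 2) • (gg k .Xm * (gg k .Xm * gg k .Tm - (v ^ 2) • (gg k .Tm * gg k .Xm))))

/-- The algebra `U = ℂ_q^{0|2⋆op} ⋊ Ũ_q(su₂) ⋉ ℂ_q^{0|2}`, presented by generators
and relations. -/
abbrev U (k : Type) [Field k] (v i : k) : Type := RingQuot (Rel k v i)

variable (k : Type) [Field k] (v i : k)

/-- The quotient map from the free algebra onto `U`. -/
noncomputable def mkU : FreeAlgebra k Gen →ₐ[k] U k v i :=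
  RingQuot.mkAlgHom k (Rel k v i)

noncomputable def UK : U k v i := mkU k v i (gg k .K)
noncomputable def UKinv : U k v i := mkU k v i (gg k .Kinv)
noncomputable def UL : U k v i := mkU k v i (gg k .L)
noncomputable def ULinv : U k v i := mkU k v i (gg k .Linv)
noncomputable def UXp : U k v i := mkU k v i (gg k .Xp)
noncomputable def UXm : U k v i := mkU k v i (gg k .Xm)
noncomputable def UTp : U k v i := mkU k v i (gg k .Tp)
noncomputable def UTm : U k v i := mkU k v i (gg k .Tm)

/-- `η₊ = -θ₊ L⁻¹`. -/
noncomputable def etaP : U k v i := -(UTp k v i * ULinv k v i)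

/-- `η₋ = L θ₋`. -/
noncomputable def etaM : U k v i := UL k v i * UTm k v i

/-- the composite root vector `e = v⁻¹ K⁻¹ (X₊θ₊ - q θ₊X₊) L⁻¹`. -/
noncomputable def eRoot : U k v i :=
  v⁻¹ • (UKinv k v i * (UXp k v i * UTp k v i - (v ^ 2) • (UTp k v i * UXp k v i)) * ULinv k v i)


section Aux

private lemma swap_inv {k : Type} [Field k] {A : Type*} [Ring A] [Algebra k A]
    {a ai b : A} {c : k} (h1 : a * ai = 1) (h2 : ai * a = 1)
    (h : a * b = c • (b * a)) : b * ai = c • (ai * b) := by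
  calc b * ai = ai * (a * b) * ai := by rw [← mul_assoc, h2, one_mul]
    _ = c • (ai * (b * (a * ai))) := by
        rw [h, mul_smul_comm, smul_mul_assoc, mul_assoc, mul_assoc]
    _ = c • (ai * b) := by rw [h1, mul_one]

private lemma swap_reassoc {k : Type} [Field k] {A : Type*} [Ring A] [Algebra k A]
    {a b : A} {c : k} (h : a * b = c • (b * a)) (x : A) :
    a * (b * x) = c • (b * (a * x)) := by
  rw [← mul_assoc, h, smul_mul_assoc, mul_assoc]

private lemma main_calc {k : Type} [Field k] {A : Type*} [Ring A] [Algebra k A]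
    (v i : k) (hv : v ≠ 0) (hq2 : (v ^ 2) ^ 2 + 1 ≠ 0) (hi : i ^ 2 = -1)
    (K Ki L' Li X T : A)
    (r1 : K * Ki = 1) (r2 : Ki * K = 1) (r3 : L' * Li = 1) (r4 : Li * L' = 1)
    (r5 : K * L' = L' * K)
    (r6 : K * X = (v ^ 2) • (X * K)) (r7 : L' * X = v⁻¹ • (X * L'))
    (r8 : K * T = v⁻¹ • (T * K)) (r9 : L' * T = i • (T * L'))
    (r10 : T * T = 0)
    (r11 : (X * T - (v ^ 2) • (T * X)) * X
        = (v ^ 2) • (X * (X * T - (v ^ 2) • (T * X)))) :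
    (v⁻¹ • (Ki * (X * T - (v ^ 2) • (T * X)) * Li)) *
      (v⁻¹ • (Ki * (X * T - (v ^ 2) • (T * X)) * Li)) = 0 ∧
    (-(T * Li)) * (v⁻¹ • (Ki * (X * T - (v ^ 2) • (T * X)) * Li))
      = -((v ^ 2)⁻¹ • ((v⁻¹ • (Ki * (X * T - (v ^ 2) • (T * X)) * Li)) * (-(T * Li)))) := by
  set q := v ^ 2 with hqdef
  have hq0 : q ≠ 0 := pow_ne_zero _ hv
  set w := X * T - q • (T * X) with hwdef
  -- inverse-side commutations
  have d1 : X * Ki = q • (Ki * X) := swap_inv r1 r2 r6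
  have d2 : T * Ki = v⁻¹ • (Ki * T) := swap_inv r1 r2 r8
  have d3 : X * Li = v⁻¹ • (Li * X) := swap_inv r3 r4 r7
  have d4 : T * Li = i • (Li * T) := swap_inv r3 r4 r9
  have r5' : L' * K = (1 : k) • (K * L') := by rw [one_smul, r5]
  have step1 : K * Li = (1 : k) • (Li * K) := swap_inv r3 r4 r5'
  have d5 : Li * Ki = (1 : k) • (Ki * Li) := swap_inv r1 r2 step1
  have d6 : Li * T = (-i) • (T * Li) := by
    rw [d4, smul_smul, show (-i) * i = 1 by linear_combination -hi, one_smul]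
  have d1' := swap_reassoc d1
  have d2' := swap_reassoc d2
  have d3' := swap_reassoc d3
  have d4' := swap_reassoc d4
  have d5' := swap_reassoc d5
  have d6' := swap_reassoc d6
  have r10' : ∀ x : A, T * (T * x) = 0 := fun x => by rw [← mul_assoc, r10, zero_mul]
  -- commutation of w with Ki
  have dwK : w * Ki = v • (Ki * w) := by
    rw [hwdef]
    simp only [sub_mul, mul_sub, smul_mul_assoc, mul_smul_comm, smul_smul, mul_assoc,
      smul_sub, d1, d2, d1', d2']
    match_scalars <;> (simp only [hqdef]; field_simp) <;> try ring
  -- commutation of w with Li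
  have dwL : w * Li = (i * v⁻¹) • (Li * w) := by
    rw [hwdef]
    simp only [sub_mul, mul_sub, smul_mul_assoc, mul_smul_comm, smul_smul, mul_assoc,
      smul_sub, d3, d4, d3', d4']
    match_scalars <;> ring
  have hivc : (-(i * v)) * (i * v⁻¹) = 1 := by
    have h2 : v * v⁻¹ = 1 := mul_inv_cancel₀ hv
    calc (-(i * v)) * (i * v⁻¹) = -(i ^ 2) * (v * v⁻¹) := by ring
      _ = 1 := by rw [hi, h2]; ring
  have dLw : Li * w = (-(i * v)) • (w * Li) := by
    rw [dwL, smul_smul, hivc, one_smul]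
  have dLw' := swap_reassoc dLw
  -- commutation of w with T
  have dwT : w * T = (-q) • (T * w) := by
    rw [hwdef]
    simp only [sub_mul, mul_sub, smul_mul_assoc, mul_smul_comm, smul_smul, mul_assoc,
      smul_sub, r10, r10', mul_zero, smul_zero, zero_sub, sub_zero, neg_smul, neg_neg]
    try module
  have dwT' := swap_reassoc dwT
  have dwK' := swap_reassoc dwK
  -- Serre consequences
  have hA : ((1 : k) + q * q) • (X * (T * (X * T))) = q • (T * (X * (X * T))) := by
    have h := congrArg (· * T) r11
    simp only [hwdef, sub_mul, mul_sub, smul_mul_assoc, mul_smul_comm, smul_smul,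
      smul_sub, mul_assoc, r10, r10', mul_zero, smul_zero, sub_zero] at h
    linear_combination (norm := module) h
  have hC : ((1 : k) + q * q) • (T * (X * (T * X))) = q • (T * (X * (X * T))) := by
    have h := congrArg (T * ·) r11
    simp only [hwdef, sub_mul, mul_sub, smul_mul_assoc, mul_smul_comm, smul_smul,
      smul_sub, mul_assoc, r10, r10', mul_zero, smul_zero, sub_zero] at h
    linear_combination (norm := module) h
  have hww0 : ((1 : k) + q * q) • (w * w) = 0 := by
    have hexp : w * w = X * (T * (X * T)) - q • (T * (X * (X * T)))
        + (q * q) • (T * (X * (T * X))) := by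
      rw [hwdef]
      simp only [sub_mul, mul_sub, smul_mul_assoc, mul_smul_comm, smul_smul,
        smul_sub, mul_assoc, r10, r10', mul_zero, smul_zero, sub_zero]
      module
    rw [hexp]
    linear_combination (norm := module) hA + (q * q) • hC
  have hcq : (1 : k) + q * q ≠ 0 := fun h0 => hq2 (by linear_combination h0)
  have hww : w * w = 0 := by
    have h := congrArg (fun z => ((1 : k) + q * q)⁻¹ • z) hww0
    simpa [smul_smul, inv_mul_cancel₀ hcq] using h
  have hww' : ∀ x : A, w * (w * x) = 0 := fun x => by rw [← mul_assoc, hww, zero_mul]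
  constructor
  · simp only [smul_mul_assoc, mul_smul_comm, smul_smul, mul_assoc]
    simp only [d5', one_smul, dwK', dLw', mul_smul_comm, smul_smul, hww',
      mul_zero, smul_zero]
  · simp only [neg_mul, mul_neg, neg_neg, smul_neg, neg_smul,
      smul_mul_assoc, mul_smul_comm, smul_smul, mul_assoc,
      d5', d2', dLw', d6', dwT', one_smul]
    match_scalars <;> (simp only [hqdef]; field_simp) <;> try ring

end Aux

/-- in `U`, the composite root vector `e` and `η₊` satisfy the
remaining fermionic quantum-plane relations `e² = 0` and `η₊ e = -q⁻¹ e η₊`. -/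
theorem fermionic_plane_relations (k : Type) [Field k] (v i : k)
    (hv : v ≠ 0) (hq : v ^ 2 - (v ^ 2)⁻¹ ≠ 0) (hq2 : (v ^ 2) ^ 2 + 1 ≠ 0)
    (hi : i ^ 2 = -1) :
    eRoot k v i * eRoot k v i = 0 ∧
      etaP k v i * eRoot k v i = -((v ^ 2)⁻¹ • (eRoot k v i * etaP k v i)) := by
  classical
  have rel : ∀ {a b : FreeAlgebra k Gen}, Rel k v i a b → mkU k v i a = mkU k v i b :=
    fun h => RingQuot.mkAlgHom_rel k h
  have r1 : UK k v i * UKinv k v i = 1 := by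
    simpa [mkU, UK, UKinv] using rel (Rel.KKinv (k := k) (v := v) (i := i))
  have r2 : UKinv k v i * UK k v i = 1 := by
    simpa [mkU, UK, UKinv] using rel (Rel.KinvK (k := k) (v := v) (i := i))
  have r3 : UL k v i * ULinv k v i = 1 := by
    simpa [mkU, UL, ULinv] using rel (Rel.LLinv (k := k) (v := v) (i := i))
  have r4 : ULinv k v i * UL k v i = 1 := by
    simpa [mkU, UL, ULinv] using rel (Rel.LinvL (k := k) (v := v) (i := i))
  have r5 : UK k v i * UL k v i = UL k v i * UK k v i := by
    simpa [mkU, UK, UL] using rel (Rel.KL (k := k) (v := v) (i := i))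
  have r6 : UK k v i * UXp k v i = (v ^ 2) • (UXp k v i * UK k v i) := by
    simpa [mkU, UK, UXp] using rel (Rel.KXp (k := k) (v := v) (i := i))
  have r7 : UL k v i * UXp k v i = v⁻¹ • (UXp k v i * UL k v i) := by
    simpa [mkU, UL, UXp] using rel (Rel.LXp (k := k) (v := v) (i := i))
  have r8 : UK k v i * UTp k v i = v⁻¹ • (UTp k v i * UK k v i) := by
    simpa [mkU, UK, UTp] using rel (Rel.KTp (k := k) (v := v) (i := i))
  have r9 : UL k v i * UTp k v i = i • (UTp k v i * UL k v i) := by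
    simpa [mkU, UL, UTp] using rel (Rel.LTp (k := k) (v := v) (i := i))
  have r10 : UTp k v i * UTp k v i = 0 := by
    simpa [mkU, UTp] using rel (Rel.TpTp (k := k) (v := v) (i := i))
  have r11 : (UXp k v i * UTp k v i - (v ^ 2) • (UTp k v i * UXp k v i)) * UXp k v i
      = (v ^ 2) • (UXp k v i *
          (UXp k v i * UTp k v i - (v ^ 2) • (UTp k v i * UXp k v i))) := by
    simpa [mkU, UXp, UTp, mul_sub, sub_mul] using
      rel (Rel.SerreP (k := k) (v := v) (i := i))
  obtain ⟨h1, h2⟩ := main_calc v i hv hq2 hi (UK k v i) (UKinv k v i) (UL k v i)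
    (ULinv k v i) (UXp k v i) (UTp k v i) r1 r2 r3 r4 r5 r6 r7 r8 r9 r10 r11
  refine ⟨?_, ?_⟩
  · simpa only [eRoot] using h1
  · simpa only [eRoot, etaP] using h2


end DoubleBos
end

section
/- In U, define η₊ := −θ₊L⁻¹ and e := v⁻¹K⁻¹(X₊θ₊ − qθ₊X₊)L⁻¹. Then the composite root vector e satisfies the q-Serre-type relation e·X₊ = v·X₊·e and the quantum-Weyl-group-type relation v·e·X₋ − q·X₋·e = η₊·K. -/
open scoped TensorProduct

namespace DoubleBos

variable (k : Type) [Field k] (v i : k)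

lemma swap_aux {k R : Type} [Field k] [Ring R] [Algebra k R]
    {a b x : R} {c : k} (hc : c ≠ 0) (h1 : a * b = 1) (h2 : b * a = 1)
    (h : a * x = c • (x * a)) : b * x = c⁻¹ • (x * b) := by
  have hx : x * a = c⁻¹ • (a * x) := by
    rw [h, smul_smul, inv_mul_cancel₀ hc, one_smul]
  calc b * x = b * (x * (a * b)) := by rw [h1, mul_one]
    _ = b * ((x * a) * b) := by rw [mul_assoc]
    _ = b * ((c⁻¹ • (a * x)) * b) := by rw [hx]
    _ = c⁻¹ • ((b * a) * (x * b)) := by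
        simp only [smul_mul_assoc, mul_smul_comm, mul_assoc]
    _ = c⁻¹ • (x * b) := by rw [h2, one_mul]

lemma U_rel {k : Type} [Field k] {v i : k} {a b : FreeAlgebra k Gen}
    (h : Rel k v i a b) : mkU k v i a = mkU k v i b :=
  RingQuot.mkAlgHom_rel k h

/-- the composite root vector `e` satisfies the q-Serre-type relation
`e X₊ = v X₊ e` and the quantum-Weyl-group-type relation `v e X₋ - q X₋ e = η₊ K`. -/
theorem root_vector_relations (k : Type) [Field k] (v i : k)
    (hv : v ≠ 0) (hq : v ^ 2 - (v ^ 2)⁻¹ ≠ 0) (hq2 : (v ^ 2) ^ 2 + 1 ≠ 0)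
    (hi : i ^ 2 = -1) :
    eRoot k v i * UXp k v i = v • (UXp k v i * eRoot k v i) ∧
      v • (eRoot k v i * UXm k v i) - (v ^ 2) • (UXm k v i * eRoot k v i) =
        etaP k v i * UK k v i := by
  have hv2 : (v ^ 2 : k) ≠ 0 := pow_ne_zero _ hv
  have hvi : (v⁻¹ : k) ≠ 0 := inv_ne_zero hv
  have hv2i : ((v ^ 2)⁻¹ : k) ≠ 0 := inv_ne_zero hv2
  have h4 : (v ^ 4 - 1 : k) ≠ 0 := by
    have h := mul_ne_zero hv2 hq
    have e : (v ^ 2 : k) * (v ^ 2 - (v ^ 2)⁻¹) = v ^ 4 - 1 := by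
      field_simp
    rwa [e] at h
  have hc : (v ^ 2 - (v ^ 2)⁻¹)⁻¹ = v ^ 2 / (v ^ 4 - 1) := by
    rw [eq_div_iff h4, inv_mul_eq_iff_eq_mul₀ hq]
    field_simp
  have hc2 : (v ^ 2 - v⁻¹ ^ 2 : k)⁻¹ = v ^ 2 / (v ^ 4 - 1) := by
    rw [inv_pow]; exact hc
  -- raw relations in U
  have hKKi : UK k v i * UKinv k v i = 1 := by
    simpa only [UK, UKinv, map_mul, map_one] using U_rel (Rel.KKinv (k := k) (v := v) (i := i))
  have hKiK : UKinv k v i * UK k v i = 1 := by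
    simpa only [UK, UKinv, map_mul, map_one] using U_rel (Rel.KinvK (k := k) (v := v) (i := i))
  have hLLi : UL k v i * ULinv k v i = 1 := by
    simpa only [UL, ULinv, map_mul, map_one] using U_rel (Rel.LLinv (k := k) (v := v) (i := i))
  have hLiL : ULinv k v i * UL k v i = 1 := by
    simpa only [UL, ULinv, map_mul, map_one] using U_rel (Rel.LinvL (k := k) (v := v) (i := i))
  have hKL : UK k v i * UL k v i = UL k v i * UK k v i := by
    simpa only [UK, UL, map_mul] using U_rel (Rel.KL (k := k) (v := v) (i := i))
  have hKXp : UK k v i * UXp k v i = (v ^ 2) • (UXp k v i * UK k v i) := by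
    simpa only [UK, UXp, map_mul, map_smul] using U_rel (Rel.KXp (k := k) (v := v) (i := i))
  have hKXm : UK k v i * UXm k v i = (v ^ 2)⁻¹ • (UXm k v i * UK k v i) := by
    simpa only [UK, UXm, map_mul, map_smul] using U_rel (Rel.KXm (k := k) (v := v) (i := i))
  have hLXp : UL k v i * UXp k v i = v⁻¹ • (UXp k v i * UL k v i) := by
    simpa only [UL, UXp, map_mul, map_smul] using U_rel (Rel.LXp (k := k) (v := v) (i := i))
  have hLXm : UL k v i * UXm k v i = v • (UXm k v i * UL k v i) := by
    simpa only [UL, UXm, map_mul, map_smul] using U_rel (Rel.LXm (k := k) (v := v) (i := i))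
  have hKTp : UK k v i * UTp k v i = v⁻¹ • (UTp k v i * UK k v i) := by
    simpa only [UK, UTp, map_mul, map_smul] using U_rel (Rel.KTp (k := k) (v := v) (i := i))
  have hXpXm : UXp k v i * UXm k v i - UXm k v i * UXp k v i =
      (v ^ 2 - (v ^ 2)⁻¹)⁻¹ • (UK k v i * UK k v i - UKinv k v i * UKinv k v i) := by
    simpa only [UXp, UXm, UK, UKinv, map_mul, map_smul, map_sub] using
      U_rel (Rel.XpXm (k := k) (v := v) (i := i))
  have hTpXm : UTp k v i * UXm k v i = UXm k v i * UTp k v i := by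
    simpa only [UTp, UXm, map_mul] using U_rel (Rel.TpXm (k := k) (v := v) (i := i))
  have hSerre : (UXp k v i * UTp k v i - (v ^ 2) • (UTp k v i * UXp k v i)) * UXp k v i =
      (v ^ 2) • (UXp k v i *
        (UXp k v i * UTp k v i - (v ^ 2) • (UTp k v i * UXp k v i))) := by
    simpa only [UXp, UTp, map_mul, map_smul, map_sub] using
      U_rel (Rel.SerreP (k := k) (v := v) (i := i))
  -- derived relations
  have hKiXp : UKinv k v i * UXp k v i = (v ^ 2)⁻¹ • (UXp k v i * UKinv k v i) :=
    swap_aux hv2 hKKi hKiK hKXp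
  have hKiXm : UKinv k v i * UXm k v i = (v ^ 2) • (UXm k v i * UKinv k v i) := by
    simpa using swap_aux hv2i hKKi hKiK hKXm
  have hLiXp : ULinv k v i * UXp k v i = v • (UXp k v i * ULinv k v i) := by
    simpa using swap_aux hvi hLLi hLiL hLXp
  have hLiXm : ULinv k v i * UXm k v i = v⁻¹ • (UXm k v i * ULinv k v i) :=
    swap_aux hv hLLi hLiL hLXm
  have hKiTp : UKinv k v i * UTp k v i = v • (UTp k v i * UKinv k v i) := by
    simpa using swap_aux hvi hKKi hKiK hKTp
  have hKLi : UK k v i * ULinv k v i = ULinv k v i * UK k v i := by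
    have h : UL k v i * UK k v i = (1 : k) • (UK k v i * UL k v i) := by
      rw [one_smul, hKL]
    have := swap_aux one_ne_zero hLLi hLiL h
    simpa using this.symm
  -- abbreviations
  set K := UK k v i with hKdef
  set Ki := UKinv k v i with hKidef
  set L := UL k v i with hLdef
  set Li := ULinv k v i with hLidef
  set Xp := UXp k v i with hXpdef
  set Xm := UXm k v i with hXmdef
  set Tp := UTp k v i with hTpdef
  set S := Xp * Tp - (v ^ 2) • (Tp * Xp) with hSdef
  have heRoot : eRoot k v i = v⁻¹ • (Ki * S * Li) := rfl
  have hetaP : etaP k v i = -(Tp * Li) := rfl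
  have hXpXm' : Xp * Xm = Xm * Xp +
      (v ^ 2 - (v ^ 2)⁻¹)⁻¹ • (K * K) - (v ^ 2 - (v ^ 2)⁻¹)⁻¹ • (Ki * Ki) := by
    have h := sub_eq_iff_eq_add.mp hXpXm
    rw [smul_sub] at h
    rw [h]; abel
  have hKKTp : K * (K * Tp) = (v⁻¹ * v⁻¹) • (Tp * (K * K)) := by
    rw [hKTp, mul_smul_comm, ← mul_assoc, hKTp, smul_mul_assoc, smul_smul, mul_assoc]
  have hKiKiTp : Ki * (Ki * Tp) = (v * v) • (Tp * (Ki * Ki)) := by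
    rw [hKiTp, mul_smul_comm, ← mul_assoc, hKiTp, smul_mul_assoc, smul_smul, mul_assoc]
  -- key step: S * Xm
  have hSXm : S * Xm = Xm * S - Tp * (K * K) := by
    have expand : S * Xm =
        Xp * (Tp * Xm) - (v ^ 2) • (Tp * (Xp * Xm)) := by
      rw [hSdef, sub_mul, smul_mul_assoc, mul_assoc, mul_assoc]
    rw [expand, hTpXm, ← mul_assoc Xp Xm Tp, hXpXm']
    simp only [add_mul, sub_mul, smul_mul_assoc, mul_add, mul_sub, mul_smul_comm,
      mul_assoc, hKKTp, hKiKiTp, smul_smul, hSdef, smul_sub]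
    rw [← mul_assoc Tp Xm Xp, hTpXm, mul_assoc Xm Tp Xp]
    match_scalars
    all_goals first
      | ring1
      | (rw [hc]; field_simp <;> ring1)
      | (rw [hc2]; field_simp <;> ring1)
  -- part 1
  have part1 : eRoot k v i * Xp = v • (Xp * eRoot k v i) := by
    have key : (Ki * S * Li) * Xp = v • (Xp * (Ki * S * Li)) := by
      calc (Ki * S * Li) * Xp = Ki * (S * (Li * Xp)) := by
            simp only [mul_assoc]
        _ = v • (Ki * ((S * Xp) * Li)) := by
            rw [hLiXp]; simp only [mul_smul_comm, mul_assoc]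
        _ = (v * v ^ 2) • ((Ki * Xp) * (S * Li)) := by
            rw [hSerre]; simp only [hSdef]
            simp only [mul_smul_comm, smul_mul_assoc, smul_smul, mul_assoc]
        _ = (v * v ^ 2 * (v ^ 2)⁻¹) • (Xp * (Ki * (S * Li))) := by
            rw [hKiXp]
            simp only [smul_mul_assoc, smul_smul, mul_assoc]
        _ = v • (Xp * (Ki * S * Li)) := by
            rw [mul_assoc (v) (v ^ 2), mul_inv_cancel₀ hv2, mul_one, mul_assoc]
    rw [heRoot, smul_mul_assoc, key, mul_smul_comm]
    simp only [mul_assoc]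
    match_scalars
    all_goals first
      | ring1
      | (field_simp <;> ring1)
  refine ⟨part1, ?_⟩
  -- part 2
  have key2 : (Ki * S * Li) * Xm =
      (v⁻¹ * v ^ 2) • (Xm * (Ki * S * Li)) - Tp * (Li * K) := by
    calc (Ki * S * Li) * Xm = Ki * (S * (Li * Xm)) := by simp only [mul_assoc]
      _ = v⁻¹ • (Ki * ((S * Xm) * Li)) := by
          rw [hLiXm]; simp only [mul_smul_comm, mul_assoc]
      _ = v⁻¹ • (Ki * ((Xm * S - Tp * (K * K)) * Li)) := by rw [hSXm]
      _ = v⁻¹ • (Ki * (Xm * (S * Li))) - v⁻¹ • (Ki * (Tp * (K * (K * Li)))) := by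
          simp only [sub_mul, mul_sub, smul_sub, mul_assoc]
      _ = (v⁻¹ * v ^ 2) • (Xm * (Ki * S * Li)) -
            (v⁻¹ * v) • (Tp * (Ki * (K * (K * Li)))) := by
          rw [← mul_assoc Ki Xm, hKiXm, ← mul_assoc Ki Tp, hKiTp]
          simp only [smul_mul_assoc, smul_smul, mul_assoc]
      _ = (v⁻¹ * v ^ 2) • (Xm * (Ki * S * Li)) - Tp * (Li * K) := by
          rw [inv_mul_cancel₀ hv, one_smul, ← mul_assoc Ki K, hKiK, one_mul, hKLi]
  have hetaPK : etaP k v i * K = (-1 : k) • (Tp * (Li * K)) := by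
    have h1 : etaP k v i = (-1 : k) • (Tp * Li) := (neg_one_smul k (Tp * Li)).symm
    rw [h1, smul_mul_assoc, mul_assoc]
  rw [heRoot, smul_mul_assoc, mul_smul_comm, key2, hetaPK]
  simp only [smul_sub, smul_smul, mul_assoc]
  match_scalars
  all_goals first
    | ring1
    | (field_simp <;> ring1)


end DoubleBos
end

section
/- In U, define η₊ := −θ₊L⁻¹, η₋ := Lθ₋, and e := v⁻¹K⁻¹(X₊θ₊ − qθ₊X₊)L⁻¹. Then the cross relations e·η₋ − η₋·e = v⁻¹·X₊·K⁻¹·L⁻² and η₊·η₋ − η₋·η₊ = (L⁻² − L²)/(q − q⁻¹) hold. (These are the relations [e, η₋] = q^{−1/2}X₊ς⁻¹ and [η₊, η₋] = (q^{H/2}ς⁻¹ − ςq^{−H/2})/(q − q⁻¹) of the double-bosonisation, where ς = L²K.) -/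
open scoped TensorProduct

namespace DoubleBos

variable (k : Type) [Field k] (v i : k)

section Helpers

variable {k : Type} [Field k] {v i : k}

lemma relU {a b : FreeAlgebra k Gen} (h : Rel k v i a b) :
    mkU k v i a = mkU k v i b :=
  RingQuot.mkAlgHom_rel k h

lemma bLLi : UL k v i * ULinv k v i = 1 := by
  simpa only [UL, ULinv, mkU, map_mul, map_one] using relU (Rel.LLinv (k := k) (v := v) (i := i))

lemma bLiL : ULinv k v i * UL k v i = 1 := by
  simpa only [UL, ULinv, mkU, map_mul, map_one] using relU (Rel.LinvL (k := k) (v := v) (i := i))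

lemma bKKi : UK k v i * UKinv k v i = 1 := by
  simpa only [UK, UKinv, mkU, map_mul, map_one] using relU (Rel.KKinv (k := k) (v := v) (i := i))

lemma bKiK : UKinv k v i * UK k v i = 1 := by
  simpa only [UK, UKinv, mkU, map_mul, map_one] using relU (Rel.KinvK (k := k) (v := v) (i := i))

lemma bKL : UK k v i * UL k v i = UL k v i * UK k v i := by
  simpa only [UK, UL, mkU, map_mul] using relU (Rel.KL (k := k) (v := v) (i := i))

lemma bKXp : UK k v i * UXp k v i = (v ^ 2) • (UXp k v i * UK k v i) := by
  simpa only [UK, UXp, mkU, map_mul, map_smul] using relU (Rel.KXp (k := k) (v := v) (i := i))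

lemma bLXp : UL k v i * UXp k v i = v⁻¹ • (UXp k v i * UL k v i) := by
  simpa only [UL, UXp, mkU, map_mul, map_smul] using relU (Rel.LXp (k := k) (v := v) (i := i))

lemma bKTp : UK k v i * UTp k v i = v⁻¹ • (UTp k v i * UK k v i) := by
  simpa only [UK, UTp, mkU, map_mul, map_smul] using relU (Rel.KTp (k := k) (v := v) (i := i))

lemma bKTm : UK k v i * UTm k v i = v • (UTm k v i * UK k v i) := by
  simpa only [UK, UTm, mkU, map_mul, map_smul] using relU (Rel.KTm (k := k) (v := v) (i := i))

lemma bLTp : UL k v i * UTp k v i = i • (UTp k v i * UL k v i) := by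
  simpa only [UL, UTp, mkU, map_mul, map_smul] using relU (Rel.LTp (k := k) (v := v) (i := i))

lemma bLTm : UL k v i * UTm k v i = (-i) • (UTm k v i * UL k v i) := by
  simpa only [UL, UTm, mkU, map_mul, map_smul] using relU (Rel.LTm (k := k) (v := v) (i := i))

lemma bXpTm : UXp k v i * UTm k v i = UTm k v i * UXp k v i := by
  simpa only [UXp, UTm, mkU, map_mul] using relU (Rel.XpTm (k := k) (v := v) (i := i))

lemma bTpTm : UTp k v i * UTm k v i - UTm k v i * UTp k v i =
    (v ^ 2 - (v ^ 2)⁻¹)⁻¹ • (UL k v i * UL k v i - ULinv k v i * ULinv k v i) := by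
  simpa only [UL, ULinv, UTp, UTm, mkU, map_mul, map_sub, map_smul] using
    relU (Rel.TpTm (k := k) (v := v) (i := i))

/-- conjugating a `q`-commutation relation by the inverse. -/
lemma swap_inv_s4 {s : k} (hs : s ≠ 0) {a ai b : U k v i}
    (h1 : a * ai = 1) (h2 : ai * a = 1) (hab : a * b = s • (b * a)) :
    ai * b = s⁻¹ • (b * ai) := by
  have hba : b * a = s⁻¹ • (a * b) := by
    rw [hab, smul_smul, inv_mul_cancel₀ hs, one_smul]
  calc ai * b = ai * (b * a) * ai := by
        conv_rhs => rw [mul_assoc, mul_assoc, h1, mul_one]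
    _ = ai * (s⁻¹ • (a * b)) * ai := by rw [hba]
    _ = s⁻¹ • (ai * a * (b * ai)) := by
        simp only [mul_smul_comm, smul_mul_assoc, mul_assoc]
    _ = s⁻¹ • (b * ai) := by rw [h2, one_mul]

lemma swap_inv1 {a ai b : U k v i}
    (h1 : a * ai = 1) (h2 : ai * a = 1) (hab : a * b = b * a) :
    ai * b = b * ai := by
  calc ai * b = ai * (b * a) * ai := by
        conv_rhs => rw [mul_assoc, mul_assoc, h1, mul_one]
    _ = ai * (a * b) * ai := by rw [hab]
    _ = ai * a * (b * ai) := by simp only [mul_assoc]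
    _ = b * ai := by rw [h2, one_mul]

lemma dLiXp (hv : v ≠ 0) :
    ULinv k v i * UXp k v i = v • (UXp k v i * ULinv k v i) := by
  have h := swap_inv_s4 (i := i) (inv_ne_zero hv) bLLi bLiL bLXp
  rwa [inv_inv] at h

lemma i_ne_zero (hi : i ^ 2 = -1) : i ≠ 0 := by
  intro h
  rw [h] at hi
  exact one_ne_zero (α := k) (by linear_combination hi)

lemma dLiTp (hi : i ^ 2 = -1) :
    ULinv k v i * UTp k v i = (-i) • (UTp k v i * ULinv k v i) := by
  have h := swap_inv_s4 (v := v) (i_ne_zero hi) bLLi bLiL bLTp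
  have h2 : i⁻¹ = -i := inv_eq_of_mul_eq_one_right (by linear_combination -hi)
  rwa [h2] at h

lemma dLiTm (hi : i ^ 2 = -1) :
    ULinv k v i * UTm k v i = i • (UTm k v i * ULinv k v i) := by
  have h := swap_inv_s4 (v := v) (neg_ne_zero.mpr (i_ne_zero hi)) bLLi bLiL bLTm
  have h2 : (-i)⁻¹ = i := inv_eq_of_mul_eq_one_right (by linear_combination -hi)
  rwa [h2] at h

lemma dLKi : UL k v i * UKinv k v i = UKinv k v i * UL k v i :=
  (swap_inv1 bKKi bKiK bKL).symm

lemma dLiKi : ULinv k v i * UKinv k v i = UKinv k v i * ULinv k v i :=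
  swap_inv1 bLLi bLiL dLKi

lemma dKiXp (hv : v ≠ 0) :
    UKinv k v i * UXp k v i = (v ^ 2)⁻¹ • (UXp k v i * UKinv k v i) :=
  swap_inv_s4 (i := i) (pow_ne_zero 2 hv) bKKi bKiK bKXp

lemma dKiTp (hv : v ≠ 0) :
    UKinv k v i * UTp k v i = v • (UTp k v i * UKinv k v i) := by
  have h := swap_inv_s4 (i := i) (inv_ne_zero hv) bKKi bKiK bKTp
  rwa [inv_inv] at h

lemma dKiTm (hv : v ≠ 0) :
    UKinv k v i * UTm k v i = v⁻¹ • (UTm k v i * UKinv k v i) :=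
  swap_inv_s4 (i := i) hv bKKi bKiK bKTm

lemma dTpTm : UTp k v i * UTm k v i =
    UTm k v i * UTp k v i
      + (v ^ 2 - (v ^ 2)⁻¹)⁻¹ • (UL k v i * UL k v i)
      - (v ^ 2 - (v ^ 2)⁻¹)⁻¹ • (ULinv k v i * ULinv k v i) := by
  have h := bTpTm (k := k) (v := v) (i := i)
  rw [sub_eq_iff_eq_add] at h
  rw [h, smul_sub]
  abel

/- primed (right-associated) forms of the rewrite rules -/
lemma pr1 {a b : U k v i} (h : a * b = 1) (x : U k v i) : a * (b * x) = x := by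
  rw [← mul_assoc, h, one_mul]

lemma prs {s : k} {a b e : U k v i} (h : a * b = s • e) (x : U k v i) :
    a * (b * x) = s • (e * x) := by
  rw [← mul_assoc, h, smul_mul_assoc]

lemma prc {a b c d : U k v i} (h : a * b = c * d) (x : U k v i) :
    a * (b * x) = c * (d * x) := by rw [← mul_assoc, h, mul_assoc]

lemma prq {s : k} {a b c d e f g h' : U k v i}
    (hrel : a * b = c * d + s • (e * f) - s • (g * h')) (x : U k v i) :
    a * (b * x) = c * (d * x) + s • (e * (f * x)) - s • (g * (h' * x)) := by
  rw [← mul_assoc, hrel, sub_mul, add_mul, smul_mul_assoc, smul_mul_assoc,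
    mul_assoc, mul_assoc, mul_assoc]

end Helpers

set_option maxHeartbeats 2000000 in
/-- cross relations `[e, η₋] = v⁻¹ X₊ K⁻¹ L⁻²` and
`[η₊, η₋] = (L⁻² - L²)/(q - q⁻¹)` in `U`. -/
theorem cross_relations (k : Type) [Field k] (v i : k)
    (hv : v ≠ 0) (hq : v ^ 2 - (v ^ 2)⁻¹ ≠ 0) (hq2 : (v ^ 2) ^ 2 + 1 ≠ 0)
    (hi : i ^ 2 = -1) :
    eRoot k v i * etaM k v i - etaM k v i * eRoot k v i =
        v⁻¹ • (UXp k v i * UKinv k v i * ULinv k v i * ULinv k v i) ∧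
      etaP k v i * etaM k v i - etaM k v i * etaP k v i =
        (v ^ 2 - (v ^ 2)⁻¹)⁻¹ •
          (ULinv k v i * ULinv k v i - UL k v i * UL k v i) := by
  have r1 := bLLi (k := k) (v := v) (i := i)
  have r2 := bLiL (k := k) (v := v) (i := i)
  have r3 := bLXp (k := k) (v := v) (i := i)
  have r4 := dLiXp (k := k) (i := i) hv
  have r5 := bLTp (k := k) (v := v) (i := i)
  have r6 := dLiTp (k := k) (v := v) hi
  have r7 := bLTm (k := k) (v := v) (i := i)
  have r8 := dLiTm (k := k) (v := v) hi
  have r9 := dLKi (k := k) (v := v) (i := i)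
  have r10 := dLiKi (k := k) (v := v) (i := i)
  have r11 := dKiXp (k := k) (i := i) hv
  have r12 := dKiTp (k := k) (i := i) hv
  have r13 := dKiTm (k := k) (i := i) hv
  have r14 := bXpTm (k := k) (v := v) (i := i)
  have r15 := dTpTm (k := k) (v := v) (i := i)
  constructor
  · simp only [eRoot, etaM]
    simp only [mul_assoc, sub_mul, mul_sub, add_mul, mul_add, smul_mul_assoc,
      mul_smul_comm, smul_sub, smul_add, smul_smul, neg_mul, mul_neg,
      mul_one, one_mul,
      r1, pr1 r1, r2, pr1 r2, r3, prs r3, r4, prs r4, r5, prs r5, r6, prs r6,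
      r7, prs r7, r8, prs r8, r9, prc r9, r10, prc r10, r11, prs r11,
      r12, prs r12, r13, prs r13, r14, prc r14, r15, prq r15]
    have hv4 : v ^ 4 - 1 ≠ 0 := by
      intro h
      apply hq
      have h2 : v ^ 2 - (v ^ 2)⁻¹ = (v ^ 4 - 1) / v ^ 2 := by
        field_simp
      rw [h2, h, zero_div]
    have hA : (-v ^ 3 + v ^ 7) ≠ 0 := by
      rw [show -v ^ 3 + v ^ 7 = v ^ 3 * (v ^ 4 - 1) by ring]
      exact mul_ne_zero (pow_ne_zero _ hv) hv4
    have hB : (-v ^ 4 + v ^ 8) ≠ 0 := by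
      rw [show -v ^ 4 + v ^ 8 = v ^ 4 * (v ^ 4 - 1) by ring]
      exact mul_ne_zero (pow_ne_zero _ hv) hv4
    have hC : (-v ^ 6 + v ^ 10) ≠ 0 := by
      rw [show -v ^ 6 + v ^ 10 = v ^ 6 * (v ^ 4 - 1) by ring]
      exact mul_ne_zero (pow_ne_zero _ hv) hv4
    have hD : (-v ^ 2 + v ^ 6) ≠ 0 := by
      rw [show -v ^ 2 + v ^ 6 = v ^ 2 * (v ^ 4 - 1) by ring]
      exact mul_ne_zero (pow_ne_zero _ hv) hv4
    have hE : (-v ^ 5 + v ^ 9) ≠ 0 := by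
      rw [show -v ^ 5 + v ^ 9 = v ^ 5 * (v ^ 4 - 1) by ring]
      exact mul_ne_zero (pow_ne_zero _ hv) hv4
    have hF : (-1 + v ^ 4) ≠ 0 := by
      rw [show -1 + v ^ 4 = v ^ 4 - 1 by ring]
      exact hv4
    match_scalars <;>
      (try ring_nf) <;> (try simp only [hi]) <;>
      (try field_simp [hv, hq, hv4, hA, hB, hC, hD, hE, hF]) <;>
      (try ring) <;> (try ring_nf) <;> (try (field_simp; ring)) <;> (try field_simp)
  · have hEtaP : etaP k v i = (-1 : k) • (UTp k v i * ULinv k v i) :=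
      (neg_one_smul k (UTp k v i * ULinv k v i)).symm
    simp only [hEtaP, etaM]
    simp only [mul_assoc, sub_mul, mul_sub, add_mul, mul_add, smul_mul_assoc,
      mul_smul_comm, smul_sub, smul_add, smul_smul, mul_one, one_mul,
      r1, pr1 r1, r2, pr1 r2, r5, prs r5, r6, prs r6,
      r7, prs r7, r8, prs r8, r15, prq r15]
    have hv4 : v ^ 4 - 1 ≠ 0 := by
      intro h
      apply hq
      have h2 : v ^ 2 - (v ^ 2)⁻¹ = (v ^ 4 - 1) / v ^ 2 := by
        field_simp
      rw [h2, h, zero_div]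
    have hA : (-v ^ 3 + v ^ 7) ≠ 0 := by
      rw [show -v ^ 3 + v ^ 7 = v ^ 3 * (v ^ 4 - 1) by ring]
      exact mul_ne_zero (pow_ne_zero _ hv) hv4
    have hB : (-v ^ 4 + v ^ 8) ≠ 0 := by
      rw [show -v ^ 4 + v ^ 8 = v ^ 4 * (v ^ 4 - 1) by ring]
      exact mul_ne_zero (pow_ne_zero _ hv) hv4
    have hC : (-v ^ 6 + v ^ 10) ≠ 0 := by
      rw [show -v ^ 6 + v ^ 10 = v ^ 6 * (v ^ 4 - 1) by ring]
      exact mul_ne_zero (pow_ne_zero _ hv) hv4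
    have hD : (-v ^ 2 + v ^ 6) ≠ 0 := by
      rw [show -v ^ 2 + v ^ 6 = v ^ 2 * (v ^ 4 - 1) by ring]
      exact mul_ne_zero (pow_ne_zero _ hv) hv4
    have hE : (-v ^ 5 + v ^ 9) ≠ 0 := by
      rw [show -v ^ 5 + v ^ 9 = v ^ 5 * (v ^ 4 - 1) by ring]
      exact mul_ne_zero (pow_ne_zero _ hv) hv4
    have hF : (-1 + v ^ 4) ≠ 0 := by
      rw [show -1 + v ^ 4 = v ^ 4 - 1 by ring]
      exact hv4
    match_scalars <;>
      (try ring_nf) <;> (try simp only [hi]) <;>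
      (try field_simp [hv, hq, hv4, hA, hB, hC, hD, hE, hF]) <;>
      (try ring) <;> (try ring_nf) <;> (try (field_simp; ring)) <;> (try field_simp)


end DoubleBos
end

section
/- Let A = k[ℤ/nℤ] be the group Hopf algebra of the cyclic group of order n, with group-like generator g (so gⁿ = 1, Δg = g⊗g, ε(g) = 1, S(g) = g^{n−1}). Define ℛ := n⁻¹ Σ_{a,b=0}^{n−1} q^{−ab} g^a ⊗ g^b ∈ A ⊗ A. Then ℛ is a quasitriangular structure on A: ℛ is invertible in the algebra A⊗A with inverse n⁻¹ Σ_{a,b=0}^{n−1} q^{ab} g^a ⊗ g^b, it satisfies (Δ⊗id)(ℛ) = ℛ₁₃ℛ₂₃ and (id⊗Δ)(ℛ) = ℛ₁₃ℛ₁₂ in A⊗A⊗A, and τ(Δ(x))·ℛ = ℛ·Δ(x) for all x ∈ A (where τ is the flip of tensor factors and ℛ₁₃, ℛ₂₃, ℛ₁₂ denote ℛ placed in the indicated tensor factors with 1 elsewhere). This makes A the anyon-generating quantum group ℤ′_{/n}. -/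
open scoped TensorProduct

namespace AnyonGen

/-- The group Hopf algebra `k[ℤ/nℤ]`. -/
abbrev A (k : Type) [Field k] (n : ℕ) : Type :=
  MonoidAlgebra k (Multiplicative (ZMod n))

variable (k : Type) [Field k] (n : ℕ)

/-- The group-like generator `g` of `k[ℤ/nℤ]` (so `gⁿ = 1`). -/
noncomputable def gElem : A k n :=
  MonoidAlgebra.of k (Multiplicative (ZMod n)) (Multiplicative.ofAdd (1 : ZMod n))

/-- The standard coproduct of the group algebra, determined by `Δg = g ⊗ g`
(every group element is group-like). -/
noncomputable def comulA : A k n →ₐ[k] A k n ⊗[k] A k n :=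
  MonoidAlgebra.lift k (A k n ⊗[k] A k n) (Multiplicative (ZMod n))
    { toFun := fun x => MonoidAlgebra.of k (Multiplicative (ZMod n)) x ⊗ₜ[k]
        MonoidAlgebra.of k (Multiplicative (ZMod n)) x
      map_one' := by simp [Algebra.TensorProduct.one_def, MonoidAlgebra.one_def]
      map_mul' := fun x y => by
        simp [Algebra.TensorProduct.tmul_mul_tmul] }

/-- `ℛ = n⁻¹ Σ_{a,b} q^{-ab} gᵃ ⊗ gᵇ`. -/
noncomputable def Rq (q : k) : A k n ⊗[k] A k n :=
  (n : k)⁻¹ • ∑ a ∈ Finset.range n, ∑ b ∈ Finset.range n,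
    q⁻¹ ^ (a * b) • (((gElem k n) ^ a) ⊗ₜ[k] ((gElem k n) ^ b))

/-- The claimed inverse `n⁻¹ Σ_{a,b} q^{ab} gᵃ ⊗ gᵇ`. -/
noncomputable def Rq' (q : k) : A k n ⊗[k] A k n :=
  (n : k)⁻¹ • ∑ a ∈ Finset.range n, ∑ b ∈ Finset.range n,
    q ^ (a * b) • (((gElem k n) ^ a) ⊗ₜ[k] ((gElem k n) ^ b))

/-- `ℛ₁₃ ∈ A ⊗ (A ⊗ A)`. -/
noncomputable def R13 (q : k) : A k n ⊗[k] (A k n ⊗[k] A k n) :=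
  (Algebra.TensorProduct.map (AlgHom.id k (A k n))
    (Algebra.TensorProduct.includeRight : A k n →ₐ[k] A k n ⊗[k] A k n)) (Rq k n q)

/-- `ℛ₁₂ ∈ A ⊗ (A ⊗ A)`. -/
noncomputable def R12 (q : k) : A k n ⊗[k] (A k n ⊗[k] A k n) :=
  (Algebra.TensorProduct.map (AlgHom.id k (A k n))
    (Algebra.TensorProduct.includeLeft : A k n →ₐ[k] A k n ⊗[k] A k n)) (Rq k n q)

/-- `ℛ₂₃ ∈ A ⊗ (A ⊗ A)`. -/
noncomputable def R23 (q : k) : A k n ⊗[k] (A k n ⊗[k] A k n) :=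
  (1 : A k n) ⊗ₜ[k] Rq k n q

end AnyonGen

/-!
Let `ψ(x) = q^x` be the additive character of `ℤ/nℤ` defined by `q`; as `q` is primitive,
`(x, y) ↦ ψ(xy)` is a perfect pairing. By Fourier inversion the elements
`P_c = n⁻¹ Σ_a ψ(-ac) gᵃ` form a complete family of orthogonal idempotents of `k[ℤ/nℤ]`, with
`gᵇ P_c = ψ(bc) P_c`. Summing the defining formula of `ℛ` over one index gives
`ℛ = Σ_c P_c ⊗ g^c = Σ_c g^c ⊗ P_c` and `ℛ' = Σ_c P_c ⊗ g^{-c}`. Products of such sums keep only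
their diagonal terms, so `ℛℛ' = Σ_c P_c ⊗ 1 = 1`, and both hexagon identities reduce to
`Δ g^c = g^c ⊗ g^c`. The braiding condition holds because `k[ℤ/nℤ]` is commutative and
cocommutative.
-/

section OrthogonalIdempotents

variable {ι k B C : Type*} [Fintype ι] [DecidableEq ι] [CommSemiring k] [Semiring B] [Algebra k B]
  [Semiring C] [Algebra k C] {P : ι → B}

theorem OrthogonalIdempotents.sum_tmul_mul_sum_tmul (hP : OrthogonalIdempotents P)
    (u v : ι → C) :
    (∑ i, P i ⊗ₜ[k] u i) * (∑ j, P j ⊗ₜ[k] v j) = ∑ i, P i ⊗ₜ[k] (u i * v i) := by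
  simp only [Finset.sum_mul_sum, Algebra.TensorProduct.tmul_mul_tmul, hP.mul_eq,
    TensorProduct.ite_tmul, Finset.sum_ite_eq, Finset.mem_univ, if_true]

theorem OrthogonalIdempotents.sum_tmul_mul_sum_tmul' (hP : OrthogonalIdempotents P)
    (u v : ι → C) :
    (∑ i, u i ⊗ₜ[k] P i) * (∑ j, v j ⊗ₜ[k] P j) = ∑ i, (u i * v i) ⊗ₜ[k] P i := by
  simp only [Finset.sum_mul_sum, Algebra.TensorProduct.tmul_mul_tmul, hP.mul_eq,
    TensorProduct.tmul_ite, Finset.sum_ite_eq, Finset.mem_univ, if_true]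

end OrthogonalIdempotents

namespace AnyonGen

open TensorProduct

section CharIdempotent

noncomputable def of' (k : Type*) [Semiring k] {R : Type*} [AddMonoid R] (x : R) :
    MonoidAlgebra k (Multiplicative R) :=
  MonoidAlgebra.of k (Multiplicative R) (Multiplicative.ofAdd x)

theorem of'_add {k R : Type*} [Semiring k] [AddMonoid R] (x y : R) :
    of' k (x + y) = of' k x * of' k y := by
  simp [of']

theorem of'_zero {k R : Type*} [Semiring k] [AddMonoid R] : of' k (0 : R) = 1 := by
  simp [of', MonoidAlgebra.one_def]

variable {R k : Type*} [CommRing R] [Fintype R] [Field k] (ψ : AddChar R k)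

noncomputable def charIdempotent (c : R) : MonoidAlgebra k (Multiplicative R) :=
  (Fintype.card R : k)⁻¹ • ∑ a, ψ (-(a * c)) • of' k a

theorem of'_mul_charIdempotent (b c : R) :
    of' k b * charIdempotent ψ c = ψ (b * c) • charIdempotent ψ c := by
  simp only [charIdempotent, mul_smul_comm, Finset.mul_sum,
    Finset.smul_sum, ← of'_add, smul_smul]
  refine Fintype.sum_equiv (Equiv.addLeft b) _ _ fun x => ?_
  rw [Equiv.coe_addLeft, mul_left_comm, ← AddChar.map_add_eq_mul]
  congr 4
  ring

theorem charIdempotent_mul_of_ne (hψ : ψ.IsPrimitive) {c d : R} (hcd : c ≠ d) :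
    charIdempotent ψ c * charIdempotent ψ d = 0 := by
  classical
  have hsum : ∑ x, ψ (-(x * c)) * ψ (x * d) = 0 := by
    simp only [← AddChar.map_add_eq_mul, neg_mul_eq_mul_neg, ← mul_add, neg_add_eq_sub,
      AddChar.sum_mulShift _ hψ, sub_eq_zero, hcd.symm, if_false, Nat.cast_zero]
  nth_rw 1 [charIdempotent]
  simp only [smul_mul_assoc, Finset.sum_mul, of'_mul_charIdempotent, smul_smul,
    ← Finset.sum_smul, hsum, zero_smul, smul_zero]

theorem sum_charIdempotent (hψ : ψ.IsPrimitive) (hR : (Fintype.card R : k) ≠ 0) :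
    ∑ c, charIdempotent ψ c = 1 := by
  classical
  have hsum (a : R) : ∑ c, ψ (-(a * c)) = if a = 0 then (Fintype.card R : k) else 0 := by
    simp only [neg_mul_eq_neg_mul, mul_comm (-a), AddChar.sum_mulShift _ hψ, neg_eq_zero]
    split_ifs <;> simp
  simp only [charIdempotent, ← Finset.smul_sum]
  rw [Finset.sum_comm]
  simp only [← Finset.sum_smul, hsum, ite_smul, zero_smul, Finset.sum_ite_eq', Finset.mem_univ,
    if_true, of'_zero, smul_smul, inv_mul_cancel₀ hR, one_smul]

theorem completeOrthogonalIdempotents_charIdempotent (hψ : ψ.IsPrimitive)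
    (hR : (Fintype.card R : k) ≠ 0) : CompleteOrthogonalIdempotents (charIdempotent ψ) :=
  CompleteOrthogonalIdempotents.iff_ortho_complete.2
    ⟨fun _ _ => charIdempotent_mul_of_ne ψ hψ, sum_charIdempotent ψ hψ hR⟩

variable {C : Type*} [AddCommMonoid C] [Module k C]

theorem sum_charIdempotent_tmul (u : R → C) :
    ∑ y, charIdempotent ψ y ⊗ₜ[k] u y =
      (Fintype.card R : k)⁻¹ • ∑ x, ∑ y, ψ (-(x * y)) • (of' k x ⊗ₜ[k] u y) := by
  simp only [charIdempotent, ← smul_tmul', sum_tmul, Finset.smul_sum]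
  rw [Finset.sum_comm]

theorem sum_tmul_charIdempotent (u : R → C) :
    ∑ x, u x ⊗ₜ[k] charIdempotent ψ x =
      (Fintype.card R : k)⁻¹ • ∑ x, ∑ y, ψ (-(x * y)) • (u x ⊗ₜ[k] of' k y) := by
  simp only [charIdempotent, tmul_smul, tmul_sum, Finset.smul_sum, mul_comm]

end CharIdempotent

section ZMod

variable {k : Type} [Field k] {n : ℕ}

theorem gElem_pow (a : ℕ) : gElem k n ^ a = of' k (a : ZMod n) := by
  rw [gElem, of', ← map_pow, ← ofAdd_nsmul, nsmul_one]

theorem sum_zmod_eq_sum_range [NeZero n] {M : Type*} [AddCommMonoid M] (f : ZMod n → M) :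
    ∑ x, f x = ∑ i ∈ Finset.range n, f i := by
  refine (Finset.sum_nbij' (fun i : ℕ => (i : ZMod n)) ZMod.val (fun _ _ => Finset.mem_univ _)
    (fun x _ => Finset.mem_range.2 x.val_lt) (fun i hi => ?_) (fun x _ => ZMod.natCast_zmod_val x)
    (fun _ _ => rfl)).symm
  rw [ZMod.val_natCast, Nat.mod_eq_of_lt (Finset.mem_range.1 hi)]

theorem comulA_of' (x : ZMod n) : comulA k n (of' k x) = of' k x ⊗ₜ[k] of' k x :=
  MonoidAlgebra.lift_of _ _

theorem comm_comulA (x : A k n) :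
    Algebra.TensorProduct.comm k (A k n) (A k n) (comulA k n x) = comulA k n x := by
  have hcocomm : (Algebra.TensorProduct.comm k (A k n) (A k n)).toAlgHom.comp (comulA k n) =
      comulA k n :=
    MonoidAlgebra.algHom_ext (fun y => by simp [comulA]) (Subsingleton.elim _ _)
  exact DFunLike.congr_fun hcocomm x

variable [NeZero n] {q : k}

theorem Rq_eq_smul_sum (hq : q ^ n = 1) :
    Rq k n q = (n : k)⁻¹ • ∑ x, ∑ y,
      AddChar.zmodChar n hq (-(x * y)) • (of' k x ⊗ₜ[k] of' k y) := by
  simp_rw [Rq, sum_zmod_eq_sum_range, gElem_pow, ← Nat.cast_mul, AddChar.map_neg_eq_inv,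
    AddChar.zmodChar_apply', inv_pow]

theorem Rq'_eq_smul_sum (hq : q ^ n = 1) :
    Rq' k n q = (n : k)⁻¹ • ∑ x, ∑ y,
      AddChar.zmodChar n hq (x * y) • (of' k x ⊗ₜ[k] of' k y) := by
  simp_rw [Rq', sum_zmod_eq_sum_range, gElem_pow, ← Nat.cast_mul, AddChar.zmodChar_apply']

theorem Rq_eq_sum_charIdempotent_tmul (hq : q ^ n = 1) :
    Rq k n q = ∑ y, charIdempotent (AddChar.zmodChar n hq) y ⊗ₜ[k] of' k y := by
  rw [Rq_eq_smul_sum hq, sum_charIdempotent_tmul, ZMod.card]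

theorem Rq_eq_sum_tmul_charIdempotent (hq : q ^ n = 1) :
    Rq k n q = ∑ x, of' k x ⊗ₜ[k] charIdempotent (AddChar.zmodChar n hq) x := by
  rw [Rq_eq_smul_sum hq, sum_tmul_charIdempotent, ZMod.card]

theorem Rq'_eq_sum_charIdempotent_tmul (hq : q ^ n = 1) :
    Rq' k n q = ∑ y, charIdempotent (AddChar.zmodChar n hq) y ⊗ₜ[k] of' k (-y) := by
  rw [Rq'_eq_smul_sum hq, sum_charIdempotent_tmul, ZMod.card]
  congr 1
  refine Finset.sum_congr rfl fun x _ => Fintype.sum_equiv (Equiv.neg _) _ _ fun y => ?_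
  rw [Equiv.neg_apply, mul_neg, neg_neg, neg_neg]

theorem completeOrthogonalIdempotents_charIdempotent_zmodChar (hn : (n : k) ≠ 0)
    (hq : IsPrimitiveRoot q n) :
    CompleteOrthogonalIdempotents (charIdempotent (k := k) (AddChar.zmodChar n hq.pow_eq_one)) :=
  completeOrthogonalIdempotents_charIdempotent _
    (AddChar.zmodChar_primitive_of_primitive_root n hq) (by rwa [ZMod.card])

theorem Rq_mul_Rq' (hn : (n : k) ≠ 0) (hq : IsPrimitiveRoot q n) : Rq k n q * Rq' k n q = 1 := by
  have hP := completeOrthogonalIdempotents_charIdempotent_zmodChar hn hq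
  rw [Rq_eq_sum_charIdempotent_tmul hq.pow_eq_one, Rq'_eq_sum_charIdempotent_tmul hq.pow_eq_one,
    hP.sum_tmul_mul_sum_tmul]
  simp only [← of'_add, add_neg_cancel, of'_zero, ← sum_tmul, hP.complete,
    Algebra.TensorProduct.one_def]

theorem assoc_map_comulA_id_Rq (hn : (n : k) ≠ 0) (hq : IsPrimitiveRoot q n) :
    ((Algebra.TensorProduct.assoc k k k (A k n) (A k n) (A k n)).toAlgHom.comp
        (Algebra.TensorProduct.map (comulA k n) (AlgHom.id k (A k n)))) (Rq k n q) =
      R13 k n q * R23 k n q := by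
  have hP := completeOrthogonalIdempotents_charIdempotent_zmodChar hn hq
  set P := charIdempotent (k := k) (AddChar.zmodChar n hq.pow_eq_one)
  have h13 : R13 k n q = Algebra.TensorProduct.assoc k k k (A k n) (A k n) (A k n)
      (∑ x, (of' k x ⊗ₜ[k] 1) ⊗ₜ[k] P x) := by
    simp [R13, Rq_eq_sum_tmul_charIdempotent hq.pow_eq_one, P]
  have h23 : R23 k n q = Algebra.TensorProduct.assoc k k k (A k n) (A k n) (A k n)
      (∑ x, (1 ⊗ₜ[k] of' k x) ⊗ₜ[k] P x) := by
    simp [R23, Rq_eq_sum_tmul_charIdempotent hq.pow_eq_one, P, tmul_sum]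
  rw [h13, h23, ← map_mul, hP.sum_tmul_mul_sum_tmul', AlgHom.comp_apply,
    Rq_eq_sum_tmul_charIdempotent hq.pow_eq_one]
  simp [comulA_of', P]

theorem map_id_comulA_Rq (hn : (n : k) ≠ 0) (hq : IsPrimitiveRoot q n) :
    (Algebra.TensorProduct.map (AlgHom.id k (A k n)) (comulA k n)) (Rq k n q) =
      R13 k n q * R12 k n q := by
  have hP := completeOrthogonalIdempotents_charIdempotent_zmodChar hn hq
  simp only [R13, R12, Rq_eq_sum_charIdempotent_tmul hq.pow_eq_one, map_sum,
    Algebra.TensorProduct.map_tmul, AlgHom.coe_id, id_eq, comulA_of',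
    Algebra.TensorProduct.includeLeft_apply, Algebra.TensorProduct.includeRight_apply]
  rw [hP.sum_tmul_mul_sum_tmul]
  simp only [Algebra.TensorProduct.tmul_mul_tmul, one_mul, mul_one]

end ZMod

theorem anyon_quasitriangular_general (k : Type) [Field k] (n : ℕ) (q : k)
    (hn : (n : k) ≠ 0) (hq : q ^ n = 1)
    (hprim : ∀ m : ℕ, 0 < m → m < n → q ^ m ≠ 1) :
    Rq k n q * Rq' k n q = 1 ∧ Rq' k n q * Rq k n q = 1 ∧
    ((Algebra.TensorProduct.assoc k k k (A k n) (A k n) (A k n)).toAlgHom.comp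
        (Algebra.TensorProduct.map (comulA k n) (AlgHom.id k (A k n)))) (Rq k n q) =
      R13 k n q * R23 k n q ∧
    (Algebra.TensorProduct.map (AlgHom.id k (A k n)) (comulA k n)) (Rq k n q) =
      R13 k n q * R12 k n q ∧
    ∀ x : A k n,
      (Algebra.TensorProduct.comm k (A k n) (A k n)) (comulA k n x) * Rq k n q =
        Rq k n q * comulA k n x := by
  have : NeZero n := ⟨by rintro rfl; exact hn Nat.cast_zero⟩
  have hroot : IsPrimitiveRoot q n := IsPrimitiveRoot.mk_of_lt q (NeZero.pos n) hq hprim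
  have hinv := Rq_mul_Rq' hn hroot
  refine ⟨hinv, (mul_comm _ _).trans hinv, assoc_map_comulA_id_Rq hn hroot,
    map_id_comulA_Rq hn hroot, fun x => ?_⟩
  rw [comm_comulA, mul_comm]

/-- for `q` a primitive `n`-th root of unity (and `n` invertible in
`k`), `ℛ = n⁻¹ Σ q^{-ab} gᵃ ⊗ gᵇ` is a quasitriangular structure on the group Hopf
algebra `k[ℤ/nℤ]`: it is invertible with inverse `n⁻¹ Σ q^{ab} gᵃ ⊗ gᵇ`, it
satisfies `(Δ⊗id)ℛ = ℛ₁₃ℛ₂₃` and `(id⊗Δ)ℛ = ℛ₁₃ℛ₁₂`, and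
`τ(Δx)·ℛ = ℛ·Δx` for all `x`.  This is the anyon-generating quantum group
`ℤ'_{/n}`. -/
theorem anyon_quasitriangular (k : Type) [Field k] (n : ℕ) [NeZero n] (q : k)
    (hn : (n : k) ≠ 0) (hq : q ^ n = 1)
    (hprim : ∀ m : ℕ, 0 < m → m < n → q ^ m ≠ 1) :
    Rq k n q * Rq' k n q = 1 ∧ Rq' k n q * Rq k n q = 1 ∧
    ((Algebra.TensorProduct.assoc k k k (A k n) (A k n) (A k n)).toAlgHom.comp
        (Algebra.TensorProduct.map (comulA k n) (AlgHom.id k (A k n)))) (Rq k n q) =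
      R13 k n q * R23 k n q ∧
    (Algebra.TensorProduct.map (AlgHom.id k (A k n)) (comulA k n)) (Rq k n q) =
      R13 k n q * R12 k n q ∧
    ∀ x : A k n,
      (Algebra.TensorProduct.comm k (A k n) (A k n)) (comulA k n x) * Rq k n q =
        Rq k n q * comulA k n x :=
  anyon_quasitriangular_general k n q hn hq hprim

end AnyonGen
end

section
/- (Double-bosonisation of the free braided groups over U_q(β).) The algebra U(β) admits a (necessarily unique, given the values on generators) Hopf algebra structure over k in which all the K_i and K̃_i are group-like, Δe_i = e_i ⊗ K_i + 1 ⊗ e_i, Δf_i = f_i ⊗ 1 + K̃_i⁻¹ ⊗ f_i, ε(e_i) = ε(f_i) = 0, ε(K_i) = ε(K̃_i) = 1, with antipode determined by S(K_i) = K_i⁻¹, S(K̃_i) = K̃_i⁻¹, S(e_i) = −e_i K_i⁻¹, S(f_i) = −K̃_i f_i. -/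
/-!
The structure maps are defined on the free algebra by their values on the generators and
descend to `U(β)` because every defining relation is preserved. Apart from the commutator
relation, each relation says that a generator `q`-commutes with a toral generator
(`x * y = c • (y * x)`); if `Δx = x ⊗ g₁ + g₂ ⊗ x` with `g₁, g₂` commuting with `t`, then `Δx`
`q`-commutes with `Δt = t ⊗ t` exactly as `x` does with `t`. For the commutator
`[Δe_i, Δf_j] = [e_i, f_j] ⊗ K_i + K̃_j⁻¹ ⊗ [e_i, f_j]` the cross terms cancel because the two
scalars involved are `q^{β_ij}` and `q^{-β_ij}`. The antipode is an algebra map into the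
opposite algebra, checked on the relations in the same way.

Coassociativity and the counit laws are identities between algebra maps, so checking them on
generators is enough. The antipode laws extend from generators to products because `S` reverses
products. For uniqueness, an algebra map is determined by its values on generators, and the
antipode is a convolution inverse of the identity, so it is unique.
-/

open scoped TensorProduct

namespace FreeDoubleBos

/-- Generators of `U(β)`: the toral generators `K_i^{±1}, K̃_i^{±1}` and the
root generators `e_i, f_i`. `tor i ff b` is `K_i` (`b = ff`) or `K_i⁻¹`
(`b = tt`); `tor i tt b` is `K̃_i` or `K̃_i⁻¹`. -/
inductive Gen (n : ℕ) : Type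
  | tor (i : Fin n) (tilde : Bool) (inv : Bool)
  | e (i : Fin n)
  | f (i : Fin n)
  deriving DecidableEq

noncomputable abbrev gg (k : Type) [Field k] {n : ℕ} (x : Gen n) :
    FreeAlgebra k (Gen n) := FreeAlgebra.ι k x

/-- The defining relations of the double-bosonisation
`k⟨f⟩ ⋊ U_q(β) ⋉ k⟨e⟩`: the `K_i, K̃_i` are invertible and mutually commute,
`e_i K_j = q^{β_{ji}} K_j e_i`, `e_i K̃_j = q^{β_{ij}} K̃_j e_i`,
`f_i K_j = q^{-β_{ji}} K_j f_i`, `f_i K̃_j = q^{-β_{ij}} K̃_j f_i`, and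
`[e_i, f_j] = δ_{ij}(K_i - K̃_i⁻¹)/(q_i - q_i⁻¹)`; there are no relations among
the `e_i` alone nor among the `f_i` alone. -/
inductive Rel (k : Type) [Field k] (n : ℕ) (β : Matrix (Fin n) (Fin n) ℤ)
    (q : k) (qi : Fin n → k) :
    FreeAlgebra k (Gen n) → FreeAlgebra k (Gen n) → Prop
  | torInv (i : Fin n) (t : Bool) :
      Rel k n β q qi (gg k (.tor i t false) * gg k (.tor i t true)) 1
  | invTor (i : Fin n) (t : Bool) :
      Rel k n β q qi (gg k (.tor i t true) * gg k (.tor i t false)) 1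
  | torComm (i j : Fin n) (t t' : Bool) (b b' : Bool) :
      Rel k n β q qi (gg k (.tor i t b) * gg k (.tor j t' b'))
        (gg k (.tor j t' b') * gg k (.tor i t b))
  | eK (i j : Fin n) :
      Rel k n β q qi (gg k (.e i) * gg k (.tor j false false))
        ((q ^ (β j i)) • (gg k (.tor j false false) * gg k (.e i)))
  | eKt (i j : Fin n) :
      Rel k n β q qi (gg k (.e i) * gg k (.tor j true false))
        ((q ^ (β i j)) • (gg k (.tor j true false) * gg k (.e i)))
  | fK (i j : Fin n) :
      Rel k n β q qi (gg k (.f i) * gg k (.tor j false false))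
        ((q ^ (-β j i)) • (gg k (.tor j false false) * gg k (.f i)))
  | fKt (i j : Fin n) :
      Rel k n β q qi (gg k (.f i) * gg k (.tor j true false))
        ((q ^ (-β i j)) • (gg k (.tor j true false) * gg k (.f i)))
  | ef_ne (i j : Fin n) (h : i ≠ j) :
      Rel k n β q qi (gg k (.e i) * gg k (.f j)) (gg k (.f j) * gg k (.e i))
  | ef_eq (i : Fin n) :
      Rel k n β q qi (gg k (.e i) * gg k (.f i) - gg k (.f i) * gg k (.e i))
        ((qi i - (qi i)⁻¹)⁻¹ •
          (gg k (.tor i false false) - gg k (.tor i true true)))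

/-- The algebra `U(β)`. -/
abbrev Ub (k : Type) [Field k] (n : ℕ) (β : Matrix (Fin n) (Fin n) ℤ)
    (q : k) (qi : Fin n → k) : Type := RingQuot (Rel k n β q qi)

variable (k : Type) [Field k] (n : ℕ) (β : Matrix (Fin n) (Fin n) ℤ)
  (q : k) (qi : Fin n → k)

noncomputable def mkUb : FreeAlgebra k (Gen n) →ₐ[k] Ub k n β q qi :=
  RingQuot.mkAlgHom k (Rel k n β q qi)

noncomputable def Kg (i : Fin n) : Ub k n β q qi := mkUb k n β q qi (gg k (.tor i false false))
noncomputable def Kginv (i : Fin n) : Ub k n β q qi := mkUb k n β q qi (gg k (.tor i false true))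
noncomputable def Ktg (i : Fin n) : Ub k n β q qi := mkUb k n β q qi (gg k (.tor i true false))
noncomputable def Ktginv (i : Fin n) : Ub k n β q qi := mkUb k n β q qi (gg k (.tor i true true))
noncomputable def eg (i : Fin n) : Ub k n β q qi := mkUb k n β q qi (gg k (.e i))
noncomputable def fg (i : Fin n) : Ub k n β q qi := mkUb k n β q qi (gg k (.f i))


/-- The data of a Hopf algebra structure on `U(β)` with the prescribed values on
the generators. -/
noncomputable def IsHopfStructure
    (Δ : Ub k n β q qi →ₐ[k] Ub k n β q qi ⊗[k] Ub k n β q qi)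
    (ε : Ub k n β q qi →ₐ[k] k)
    (S : Ub k n β q qi →ₗ[k] Ub k n β q qi) : Prop :=
  -- coassociativity
  (Algebra.TensorProduct.assoc k k k (Ub k n β q qi) (Ub k n β q qi)
        (Ub k n β q qi)).toAlgHom.comp
      ((Algebra.TensorProduct.map Δ (AlgHom.id k (Ub k n β q qi))).comp Δ) =
    (Algebra.TensorProduct.map (AlgHom.id k (Ub k n β q qi)) Δ).comp Δ ∧
  -- counit laws
  (Algebra.TensorProduct.lid k (Ub k n β q qi)).toAlgHom.comp
      ((Algebra.TensorProduct.map ε (AlgHom.id k (Ub k n β q qi))).comp Δ) =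
    AlgHom.id k (Ub k n β q qi) ∧
  (Algebra.TensorProduct.rid k k (Ub k n β q qi)).toAlgHom.comp
      ((Algebra.TensorProduct.map (AlgHom.id k (Ub k n β q qi)) ε).comp Δ) =
    AlgHom.id k (Ub k n β q qi) ∧
  -- antipode laws
  (LinearMap.mul' k (Ub k n β q qi)) ∘ₗ (TensorProduct.map S LinearMap.id) ∘ₗ
      Δ.toLinearMap =
    (Algebra.linearMap k (Ub k n β q qi)) ∘ₗ ε.toLinearMap ∧
  (LinearMap.mul' k (Ub k n β q qi)) ∘ₗ (TensorProduct.map LinearMap.id S) ∘ₗ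
      Δ.toLinearMap =
    (Algebra.linearMap k (Ub k n β q qi)) ∘ₗ ε.toLinearMap ∧
  -- the K_i, K̃_i (and their inverses) are group-like
  (∀ i, Δ (Kg k n β q qi i) = Kg k n β q qi i ⊗ₜ[k] Kg k n β q qi i) ∧
  (∀ i, Δ (Kginv k n β q qi i) = Kginv k n β q qi i ⊗ₜ[k] Kginv k n β q qi i) ∧
  (∀ i, Δ (Ktg k n β q qi i) = Ktg k n β q qi i ⊗ₜ[k] Ktg k n β q qi i) ∧
  (∀ i, Δ (Ktginv k n β q qi i) = Ktginv k n β q qi i ⊗ₜ[k] Ktginv k n β q qi i) ∧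
  -- Δe_i = e_i ⊗ K_i + 1 ⊗ e_i,  Δf_i = f_i ⊗ 1 + K̃_i⁻¹ ⊗ f_i
  (∀ i, Δ (eg k n β q qi i) =
      eg k n β q qi i ⊗ₜ[k] Kg k n β q qi i + 1 ⊗ₜ[k] eg k n β q qi i) ∧
  (∀ i, Δ (fg k n β q qi i) =
      fg k n β q qi i ⊗ₜ[k] 1 + Ktginv k n β q qi i ⊗ₜ[k] fg k n β q qi i) ∧
  -- counit values
  (∀ i, ε (Kg k n β q qi i) = 1) ∧ (∀ i, ε (Kginv k n β q qi i) = 1) ∧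
  (∀ i, ε (Ktg k n β q qi i) = 1) ∧ (∀ i, ε (Ktginv k n β q qi i) = 1) ∧
  (∀ i, ε (eg k n β q qi i) = 0) ∧ (∀ i, ε (fg k n β q qi i) = 0) ∧
  -- antipode values
  (∀ i, S (Kg k n β q qi i) = Kginv k n β q qi i) ∧
  (∀ i, S (Kginv k n β q qi i) = Kg k n β q qi i) ∧
  (∀ i, S (Ktg k n β q qi i) = Ktginv k n β q qi i) ∧
  (∀ i, S (Ktginv k n β q qi i) = Ktg k n β q qi i) ∧
  (∀ i, S (eg k n β q qi i) = -(eg k n β q qi i * Kginv k n β q qi i)) ∧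
  (∀ i, S (fg k n β q qi i) = -(Ktg k n β q qi i * fg k n β q qi i))

end FreeDoubleBos

section QCommute

variable {R B : Type*} [CommSemiring R]

def QCommute [Semiring B] [Algebra R B] (c : R) (x y : B) : Prop := x * y = c • (y * x)

namespace QCommute

section Semiring

variable [Semiring B] [Algebra R B] {c d : R} {x y z t t' : B}

theorem inv_left (h : QCommute c x t) (h₁ : t * t' = 1) (h₂ : t' * t = 1) :
    QCommute c t' x := by
  unfold QCommute at h ⊢
  calc t' * x = t' * (x * t) * t' := by rw [mul_assoc, mul_assoc, h₁, mul_one]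
    _ = c • (t' * t * (x * t')) := by
      rw [h, mul_smul_comm, smul_mul_assoc]; simp only [mul_assoc]
    _ = c • (x * t') := by rw [h₂, one_mul]

theorem mul_right_of_commute (h : QCommute c x y) (h' : Commute x z) :
    QCommute c x (y * z) := by
  unfold QCommute at h ⊢
  rw [← mul_assoc, h, smul_mul_assoc, mul_assoc, h'.eq, mul_assoc]

theorem _root_.Commute.qCommute_mul_right (h' : Commute x y) (h : QCommute c x z) :
    QCommute c x (y * z) := by
  unfold QCommute at h ⊢
  rw [← mul_assoc, h'.eq, mul_assoc, h, mul_smul_comm, mul_assoc]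

theorem op (h : QCommute c x y) : QCommute c (MulOpposite.op y) (MulOpposite.op x) := by
  unfold QCommute at h ⊢
  rw [← MulOpposite.op_mul, h, MulOpposite.op_smul, MulOpposite.op_mul]

theorem tmul_add_tmul {g₁ g₂ : B} (h : QCommute c x t) (h₁ : Commute g₁ t)
    (h₂ : Commute g₂ t) : QCommute c (x ⊗ₜ[R] g₁ + g₂ ⊗ₜ[R] x) (t ⊗ₜ[R] t) := by
  unfold QCommute at h ⊢
  simp only [add_mul, mul_add, Algebra.TensorProduct.tmul_mul_tmul, h, h₁.eq, h₂.eq,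
    TensorProduct.smul_tmul', TensorProduct.tmul_smul, smul_add]

end Semiring

theorem neg_right [Ring B] [Algebra R B] {c : R} {x y : B} (h : QCommute c x y) :
    QCommute c x (-y) := by
  unfold QCommute at h ⊢
  rw [mul_neg, neg_mul, h, smul_neg]

end QCommute

section Ring

variable [Ring B] [Algebra R B] {c d : R}

theorem skewPrimitive_commutator {e f K G : B} (hGe : QCommute c G e) (hfK : QCommute d f K)
    (hcd : c * d = 1) :
    (e ⊗ₜ[R] K + 1 ⊗ₜ e) * (f ⊗ₜ 1 + G ⊗ₜ f) - (f ⊗ₜ 1 + G ⊗ₜ f) * (e ⊗ₜ K + 1 ⊗ₜ e)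
      = (e * f - f * e) ⊗ₜ K + G ⊗ₜ (e * f - f * e) := by
  have hmid : (G * e) ⊗ₜ[R] (f * K) = (e * G) ⊗ₜ[R] (K * f) := by
    rw [hGe, hfK, TensorProduct.smul_tmul_smul, hcd, one_smul]
  simp only [add_mul, mul_add, Algebra.TensorProduct.tmul_mul_tmul, one_mul, mul_one, hmid,
    TensorProduct.sub_tmul, TensorProduct.tmul_sub]
  abel

theorem neg_mul_neg_sub_neg_mul_neg_eq {e f x y : B} (hyf : QCommute c y f) (hex : QCommute d e x)
    (hxy : Commute x y) (hcd : c * d = 1) :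
    -(x * f) * -(e * y) - -(e * y) * -(x * f) = x * (f * e - e * f) * y := by
  have : e * y * (x * f) = x * (e * f) * y := by
    calc e * y * (x * f) = e * x * (y * f) := by
          rw [mul_assoc, ← mul_assoc y, ← hxy.eq]; simp only [mul_assoc]
      _ = (c * d) • (x * (e * f) * y) := by
        rw [hex, hyf, smul_mul_smul_comm, mul_comm d c]; simp only [mul_assoc]
      _ = x * (e * f) * y := by rw [hcd, one_smul]
  rw [neg_mul_neg, neg_mul_neg, this, mul_sub, sub_mul]; simp only [mul_assoc]

theorem commute_neg_mul_neg_mul_of_qCommute {e f x y : B} (hyf : QCommute c y f)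
    (hex : QCommute d e x) (hxy : Commute x y) (hcd : c * d = 1) (hef : Commute e f) :
    Commute (-(x * f)) (-(e * y)) := by
  rw [Commute, SemiconjBy, ← sub_eq_zero, neg_mul_neg_sub_neg_mul_neg_eq hyf hex hxy hcd, hef.eq,
    sub_self, mul_zero, zero_mul]

theorem neg_mul_neg_sub_neg_mul_neg_eq_smul {e f x y K G : B} {r : R} (hyf : QCommute c y f)
    (hex : QCommute d e x) (hxy : Commute x y) (hcd : c * d = 1)
    (hef : e * f - f * e = r • (K - G)) (hKy : K * y = 1) (hxG : x * G = 1) :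
    -(x * f) * -(e * y) - -(e * y) * -(x * f) = r • (y - x) := by
  rw [neg_mul_neg_sub_neg_mul_neg_eq hyf hex hxy hcd, ← neg_sub, hef, mul_neg, neg_mul,
    mul_smul_comm, smul_mul_assoc, mul_sub, sub_mul, mul_assoc, hKy, mul_one, hxG, one_mul,
    ← smul_neg, neg_sub]

end Ring

end QCommute

section AntipodeLaws

open TensorProduct LinearMap

variable {R B : Type*} [CommSemiring R]

section Semiring

variable [Semiring B] [Algebra R B] {S : B →ₗ[R] B}

theorem mul'_map_left_mul_tmul (hS : ∀ a b, S (a * b) = S b * S a) (u : B ⊗[R] B) (c d : B) :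
    mul' R B (map S id (u * c ⊗ₜ d)) = S c * mul' R B (map S id u) * d := by
  induction u with
  | zero => simp
  | tmul a b => simp [hS, mul_assoc]
  | add u v hu hv => simp only [add_mul, map_add, hu, hv, mul_add, add_mul]

theorem mul'_map_left_mul_of_eq_algebraMap (hS : ∀ a b, S (a * b) = S b * S a)
    {u : B ⊗[R] B} {r : R} (hu : mul' R B (map S id u) = algebraMap R B r) (v : B ⊗[R] B) :
    mul' R B (map S id (u * v)) = r • mul' R B (map S id v) := by
  induction v with
  | zero => simp
  | tmul c d => simp [mul'_map_left_mul_tmul hS, hu, Algebra.algebraMap_eq_smul_one]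
  | add v w hv hw => simp only [mul_add, map_add, hv, hw, smul_add]

theorem mul'_map_right_tmul_mul (hS : ∀ a b, S (a * b) = S b * S a) (a b : B) (v : B ⊗[R] B) :
    mul' R B (map id S (a ⊗ₜ b * v)) = a * mul' R B (map id S v) * S b := by
  induction v with
  | zero => simp
  | tmul c d => simp [hS, mul_assoc]
  | add v w hv hw => simp only [mul_add, map_add, hv, hw, add_mul]

theorem mul'_map_right_mul_of_eq_algebraMap (hS : ∀ a b, S (a * b) = S b * S a)
    {v : B ⊗[R] B} {r : R} (hv : mul' R B (map id S v) = algebraMap R B r) (u : B ⊗[R] B) :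
    mul' R B (map id S (u * v)) = r • mul' R B (map id S u) := by
  induction u with
  | zero => simp
  | tmul a b => simp [mul'_map_right_tmul_mul hS, hv, Algebra.algebraMap_eq_smul_one]
  | add u w hu hw => simp only [add_mul, map_add, hu, hw, smul_add]

end Semiring

section Ring

variable [Ring B] [Algebra R B] {S : B →ₗ[R] B}

theorem mul'_map_left_tmul_add_one_tmul {x g g' : B} (h1 : S 1 = 1) (hx : S x = -(x * g'))
    (hg : g' * g = 1) : mul' R B (map S id (x ⊗ₜ g + 1 ⊗ₜ x)) = 0 := by
  simp [h1, hx, mul_assoc, hg]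

theorem mul'_map_right_tmul_one_add_tmul {x g g' : B} (h1 : S 1 = 1) (hx : S x = -(g' * x))
    (hg : g * g' = 1) : mul' R B (map id S (x ⊗ₜ 1 + g ⊗ₜ x)) = 0 := by
  simp [h1, hx, ← mul_assoc, hg]

end Ring

end AntipodeLaws

theorem Bialgebra.antipode_unique {R A : Type*} [CommSemiring R] [Semiring A] [Bialgebra R A]
    {S S' : A →ₗ[R] A}
    (hS : LinearMap.mul' R A ∘ₗ S.rTensor A ∘ₗ Coalgebra.comul =
      Algebra.linearMap R A ∘ₗ Coalgebra.counit)
    (hS' : LinearMap.mul' R A ∘ₗ S'.lTensor A ∘ₗ Coalgebra.comul =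
      Algebra.linearMap R A ∘ₗ Coalgebra.counit) :
    S = S' :=
  congrArg WithConv.ofConv <| left_inv_eq_right_inv (a := WithConv.toConv LinearMap.id)
    (congrArg WithConv.toConv hS) (congrArg WithConv.toConv hS')

namespace FreeDoubleBos

variable {k : Type} [Field k] {n : ℕ} {β : Matrix (Fin n) (Fin n) ℤ} {q : k} {qi : Fin n → k}

local notation "𝐔" => Ub k n β q qi

variable (k n β q qi) in
noncomputable def gen (x : Gen n) : 𝐔 := mkUb k n β q qi (gg k x)

local notation "𝐠" => gen k n β q qi
local notation "𝐞" i:max => gen k n β q qi (Gen.e i)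
local notation "𝐟" i:max => gen k n β q qi (Gen.f i)
local notation "𝐊" i:max => gen k n β q qi (Gen.tor i false false)
local notation "𝐊⁻¹" i:max => gen k n β q qi (Gen.tor i false true)
local notation "𝐊̃" i:max => gen k n β q qi (Gen.tor i true false)
local notation "𝐊̃⁻¹" i:max => gen k n β q qi (Gen.tor i true true)

theorem algHom_ext {B : Type*} [Semiring B] [Algebra k B] {F G : 𝐔 →ₐ[k] B}
    (h : ∀ x, F (𝐠 x) = G (𝐠 x)) : F = G :=
  RingQuot.ringQuot_ext' k _ _ (FreeAlgebra.hom_ext (funext h))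

theorem induction_on {P : 𝐔 → Prop} (x : 𝐔) (algebraMap : ∀ r, P (algebraMap k 𝐔 r))
    (gen : ∀ x, P (𝐠 x)) (add : ∀ a b, P a → P b → P (a + b))
    (mul : ∀ a b, P a → P b → P (a * b)) : P x := by
  obtain ⟨a, rfl⟩ := RingQuot.mkAlgHom_surjective k (Rel k n β q qi) x
  induction a using FreeAlgebra.induction with
  | grade0 r => simpa using algebraMap r
  | grade1 x => exact gen x
  | mul a b ha hb => simpa using mul _ _ ha hb
  | add a b ha hb => simpa using add _ _ ha hb

section Relations

theorem mkUb_rel {a b : FreeAlgebra k (Gen n)} (h : Rel k n β q qi a b) :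
    mkUb k n β q qi a = mkUb k n β q qi b :=
  RingQuot.mkAlgHom_rel k h

theorem gen_tor_mul_inv (i : Fin n) (t : Bool) : 𝐠 (.tor i t false) * 𝐠 (.tor i t true) = 1 := by
  have h := mkUb_rel (Rel.torInv (β := β) (q := q) (qi := qi) i t)
  rwa [map_mul, map_one] at h

theorem gen_tor_inv_mul (i : Fin n) (t : Bool) : 𝐠 (.tor i t true) * 𝐠 (.tor i t false) = 1 := by
  have h := mkUb_rel (Rel.invTor (β := β) (q := q) (qi := qi) i t)
  rwa [map_mul, map_one] at h

theorem commute_gen_tor (i j : Fin n) (t t' b b' : Bool) :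
    Commute (𝐠 (.tor i t b)) (𝐠 (.tor j t' b')) := by
  have h := mkUb_rel (Rel.torComm (β := β) (q := q) (qi := qi) i j t t' b b')
  rwa [map_mul, map_mul] at h

theorem qCommute_e_K (i j : Fin n) : QCommute (q ^ β j i) (𝐞 i) (𝐊 j) := by
  have h := mkUb_rel (Rel.eK (β := β) (q := q) (qi := qi) i j)
  rwa [map_mul, map_smul, map_mul] at h

theorem qCommute_e_Kt (i j : Fin n) : QCommute (q ^ β i j) (𝐞 i) (𝐊̃ j) := by
  have h := mkUb_rel (Rel.eKt (β := β) (q := q) (qi := qi) i j)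
  rwa [map_mul, map_smul, map_mul] at h

theorem qCommute_f_K (i j : Fin n) : QCommute (q ^ (-β j i)) (𝐟 i) (𝐊 j) := by
  have h := mkUb_rel (Rel.fK (β := β) (q := q) (qi := qi) i j)
  rwa [map_mul, map_smul, map_mul] at h

theorem qCommute_f_Kt (i j : Fin n) : QCommute (q ^ (-β i j)) (𝐟 i) (𝐊̃ j) := by
  have h := mkUb_rel (Rel.fKt (β := β) (q := q) (qi := qi) i j)
  rwa [map_mul, map_smul, map_mul] at h

theorem qCommute_Kinv_e (i j : Fin n) : QCommute (q ^ β j i) (𝐊⁻¹ j) (𝐞 i) :=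
  (qCommute_e_K i j).inv_left (gen_tor_mul_inv j false) (gen_tor_inv_mul j false)

theorem qCommute_Ktinv_e (i j : Fin n) : QCommute (q ^ β i j) (𝐊̃⁻¹ j) (𝐞 i) :=
  (qCommute_e_Kt i j).inv_left (gen_tor_mul_inv j true) (gen_tor_inv_mul j true)

theorem qCommute_Kinv_f (i j : Fin n) : QCommute (q ^ (-β j i)) (𝐊⁻¹ j) (𝐟 i) :=
  (qCommute_f_K i j).inv_left (gen_tor_mul_inv j false) (gen_tor_inv_mul j false)

theorem qCommute_Ktinv_f (i j : Fin n) : QCommute (q ^ (-β i j)) (𝐊̃⁻¹ j) (𝐟 i) :=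
  (qCommute_f_Kt i j).inv_left (gen_tor_mul_inv j true) (gen_tor_inv_mul j true)

theorem commute_e_f {i j : Fin n} (hij : i ≠ j) : Commute (𝐞 i) (𝐟 j) := by
  have h := mkUb_rel (Rel.ef_ne (β := β) (q := q) (qi := qi) i j hij)
  rwa [map_mul, map_mul] at h

theorem e_mul_f_sub_f_mul_e (i : Fin n) :
    𝐞 i * 𝐟 i - 𝐟 i * 𝐞 i = (qi i - (qi i)⁻¹)⁻¹ • (𝐊 i - 𝐊̃⁻¹ i) := by
  have h := mkUb_rel (Rel.ef_eq (β := β) (q := q) (qi := qi) i)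
  rwa [map_sub, map_mul, map_mul, map_smul, map_sub] at h

end Relations

section Counit

variable (k n) in
def counitOnGen : Gen n → k
  | .tor .. => 1
  | .e _ => 0
  | .f _ => 0

variable (k n β q qi) in
noncomputable def counit : 𝐔 →ₐ[k] k :=
  RingQuot.liftAlgHom k ⟨FreeAlgebra.lift k (counitOnGen k n), fun _ _ h => by
    induction h <;> simp [counitOnGen]⟩

@[simp] theorem counit_gen (x : Gen n) : counit k n β q qi (𝐠 x) = counitOnGen k n x := by
  simp [counit, gen, mkUb]

end Counit

section Comul

open TensorProduct

variable (k n β q qi) in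
noncomputable def comulOnGen : Gen n → 𝐔 ⊗[k] 𝐔
  | .tor i t b => 𝐠 (.tor i t b) ⊗ₜ 𝐠 (.tor i t b)
  | .e i => 𝐞 i ⊗ₜ 𝐊 i + 1 ⊗ₜ 𝐞 i
  | .f i => 𝐟 i ⊗ₜ 1 + 𝐊̃⁻¹ i ⊗ₜ 𝐟 i

theorem lift_comulOnGen_rel (hq : q ≠ 0) ⦃a b : FreeAlgebra k (Gen n)⦄
    (h : Rel k n β q qi a b) :
    FreeAlgebra.lift k (comulOnGen k n β q qi) a =
      FreeAlgebra.lift k (comulOnGen k n β q qi) b := by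
  have hq' (z : ℤ) : q ^ z * q ^ (-z) = 1 := (mul_comm _ _).trans (zpow_neg_mul_zpow_self z hq)
  induction h with
  | torInv i t =>
    simp [comulOnGen, gen_tor_mul_inv, Algebra.TensorProduct.one_def]
  | invTor i t =>
    simp [comulOnGen, gen_tor_inv_mul, Algebra.TensorProduct.one_def]
  | torComm i j t t' b b' =>
    simp [comulOnGen, (commute_gen_tor i j t t' b b').eq]
  | eK i j =>
    simp only [map_mul, map_smul, FreeAlgebra.lift_ι_apply, comulOnGen]
    exact (qCommute_e_K i j).tmul_add_tmul (commute_gen_tor _ _ _ _ _ _) (Commute.one_left _)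
  | eKt i j =>
    simp only [map_mul, map_smul, FreeAlgebra.lift_ι_apply, comulOnGen]
    exact (qCommute_e_Kt i j).tmul_add_tmul (commute_gen_tor _ _ _ _ _ _) (Commute.one_left _)
  | fK i j =>
    simp only [map_mul, map_smul, FreeAlgebra.lift_ι_apply, comulOnGen]
    exact (qCommute_f_K i j).tmul_add_tmul (Commute.one_left _) (commute_gen_tor _ _ _ _ _ _)
  | fKt i j =>
    simp only [map_mul, map_smul, FreeAlgebra.lift_ι_apply, comulOnGen]
    exact (qCommute_f_Kt i j).tmul_add_tmul (Commute.one_left _) (commute_gen_tor _ _ _ _ _ _)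
  | ef_ne i j hij =>
    simp only [map_mul, FreeAlgebra.lift_ι_apply, comulOnGen]
    rw [← sub_eq_zero, skewPrimitive_commutator (qCommute_Ktinv_e i j) (qCommute_f_K j i) (hq' _),
      (commute_e_f hij).eq, sub_self, zero_tmul, tmul_zero, add_zero]
  | ef_eq i =>
    simp only [map_mul, map_sub, map_smul, FreeAlgebra.lift_ι_apply, comulOnGen]
    rw [skewPrimitive_commutator (qCommute_Ktinv_e i i) (qCommute_f_K i i) (hq' _),
      e_mul_f_sub_f_mul_e]
    simp only [smul_tmul', tmul_smul, sub_tmul, tmul_sub, smul_sub]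
    abel

variable (k n β q qi) in
noncomputable def comul (hq : q ≠ 0) : 𝐔 →ₐ[k] 𝐔 ⊗[k] 𝐔 :=
  RingQuot.liftAlgHom k ⟨FreeAlgebra.lift k (comulOnGen k n β q qi), lift_comulOnGen_rel hq⟩

@[simp] theorem comul_gen (hq : q ≠ 0) (x : Gen n) :
    comul k n β q qi hq (𝐠 x) = comulOnGen k n β q qi x := by
  simp [comul, gen, mkUb]

end Comul

section Antipode

open MulOpposite

variable (k n β q qi) in
noncomputable def antipodeOnGen : Gen n → 𝐔
  | .tor i t b => 𝐠 (.tor i t !b)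
  | .e i => -(𝐞 i * 𝐊⁻¹ i)
  | .f i => -(𝐊̃ i * 𝐟 i)

theorem lift_antipodeOnGen_rel (hq : q ≠ 0) ⦃a b : FreeAlgebra k (Gen n)⦄
    (h : Rel k n β q qi a b) :
    FreeAlgebra.lift k (op ∘ antipodeOnGen k n β q qi) a =
      FreeAlgebra.lift k (op ∘ antipodeOnGen k n β q qi) b := by
  induction h with
  | torInv i t =>
    simp [antipodeOnGen, ← op_mul, gen_tor_mul_inv]
  | invTor i t =>
    simp [antipodeOnGen, ← op_mul, gen_tor_inv_mul]
  | torComm i j t t' b b' =>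
    simp [antipodeOnGen, ← op_mul, (commute_gen_tor j i t' t (!b') (!b)).eq]
  | eK i j =>
    simp only [map_mul, map_smul, FreeAlgebra.lift_ι_apply, Function.comp_apply, antipodeOnGen]
    exact ((qCommute_Kinv_e i j).mul_right_of_commute
      (commute_gen_tor j i false false true true)).neg_right.op
  | eKt i j =>
    simp only [map_mul, map_smul, FreeAlgebra.lift_ι_apply, Function.comp_apply, antipodeOnGen]
    exact ((qCommute_Ktinv_e i j).mul_right_of_commute
      (commute_gen_tor j i true false true true)).neg_right.op
  | fK i j =>
    simp only [map_mul, map_smul, FreeAlgebra.lift_ι_apply, Function.comp_apply, antipodeOnGen]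
    exact ((commute_gen_tor j i false true true false).qCommute_mul_right
      (qCommute_Kinv_f i j)).neg_right.op
  | fKt i j =>
    simp only [map_mul, map_smul, FreeAlgebra.lift_ι_apply, Function.comp_apply, antipodeOnGen]
    exact ((commute_gen_tor j i true true true false).qCommute_mul_right
      (qCommute_Ktinv_f i j)).neg_right.op
  -- `rw` cannot use lemmas such as `neg_mul` in `Ub` (the `Neg` of `RingQuot` and the `Ring`
  -- structure of `FreeAlgebra` do not unify at instance transparency), so the remaining ring
  -- identities are packaged as generic lemmas and closed by `exact`.
  | ef_ne i j hij =>
    simp only [map_mul, FreeAlgebra.lift_ι_apply, Function.comp_apply, antipodeOnGen, ← op_mul]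
    exact congrArg op (commute_neg_mul_neg_mul_of_qCommute (qCommute_Kinv_f j i)
      (qCommute_e_Kt i j) (commute_gen_tor j i true false false true)
      (zpow_neg_mul_zpow_self _ hq) (commute_e_f hij)).eq
  | ef_eq i =>
    simp only [map_mul, map_sub, map_smul, FreeAlgebra.lift_ι_apply, Function.comp_apply,
      antipodeOnGen, ← op_mul, ← op_sub, ← op_smul]
    exact congrArg op (neg_mul_neg_sub_neg_mul_neg_eq_smul (qCommute_Kinv_f i i) (qCommute_e_Kt i i)
      (commute_gen_tor i i true false false true) (zpow_neg_mul_zpow_self _ hq)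
      (e_mul_f_sub_f_mul_e i) (gen_tor_mul_inv i false) (gen_tor_mul_inv i true))

variable (k n β q qi) in
noncomputable def antipodeOp (hq : q ≠ 0) : 𝐔 →ₐ[k] 𝐔ᵐᵒᵖ :=
  RingQuot.liftAlgHom k
    ⟨FreeAlgebra.lift k (op ∘ antipodeOnGen k n β q qi), lift_antipodeOnGen_rel hq⟩

variable (k n β q qi) in
noncomputable def antipode (hq : q ≠ 0) : 𝐔 →ₗ[k] 𝐔 :=
  (opLinearEquiv k).symm.toLinearMap ∘ₗ (antipodeOp k n β q qi hq).toLinearMap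

variable (hq : q ≠ 0)

theorem antipode_apply (x : 𝐔) : antipode k n β q qi hq x = unop (antipodeOp k n β q qi hq x) :=
  rfl

@[simp] theorem antipode_gen (x : Gen n) :
    antipode k n β q qi hq (𝐠 x) = antipodeOnGen k n β q qi x := by
  simp [antipode_apply, antipodeOp, gen, mkUb]

theorem antipode_mul (a b : 𝐔) :
    antipode k n β q qi hq (a * b) = antipode k n β q qi hq b * antipode k n β q qi hq a := by
  simp [antipode_apply]

@[simp] theorem antipode_algebraMap (r : k) :
    antipode k n β q qi hq (algebraMap k 𝐔 r) = algebraMap k 𝐔 r := by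
  simp [antipode_apply]

@[simp] theorem antipode_one : antipode k n β q qi hq 1 = 1 := by
  simpa using antipode_algebraMap hq 1

end Antipode

section Laws

open TensorProduct

variable (hq : q ≠ 0)

theorem comul_coassoc :
    (Algebra.TensorProduct.assoc k k k 𝐔 𝐔 𝐔).toAlgHom.comp
        ((Algebra.TensorProduct.map (comul k n β q qi hq) (AlgHom.id k 𝐔)).comp
          (comul k n β q qi hq)) =
      (Algebra.TensorProduct.map (AlgHom.id k 𝐔) (comul k n β q qi hq)).comp
        (comul k n β q qi hq) := by
  refine algHom_ext fun x => ?_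
  rcases x with ⟨i, t, b⟩ | i | i <;>
    simp [comulOnGen, tmul_add, add_tmul, Algebra.TensorProduct.one_def] <;> abel

theorem map_counit_comp_comul :
    (Algebra.TensorProduct.map (counit k n β q qi) (AlgHom.id k 𝐔)).comp (comul k n β q qi hq) =
      (Algebra.TensorProduct.lid k 𝐔).symm.toAlgHom := by
  refine algHom_ext fun x => ?_
  rcases x with ⟨i, t, b⟩ | i | i <;> simp [comulOnGen, counitOnGen]

theorem map_id_counit_comp_comul :
    (Algebra.TensorProduct.map (AlgHom.id k 𝐔) (counit k n β q qi)).comp (comul k n β q qi hq) =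
      (Algebra.TensorProduct.rid k k 𝐔).symm.toAlgHom := by
  refine algHom_ext fun x => ?_
  rcases x with ⟨i, t, b⟩ | i | i <;> simp [comulOnGen, counitOnGen]

variable (k n β q qi) in
noncomputable abbrev bialgebra : Bialgebra k 𝐔 :=
  Bialgebra.ofAlgHom (comul k n β q qi hq) (counit k n β q qi) (comul_coassoc hq)
    (map_counit_comp_comul hq) (map_id_counit_comp_comul hq)

theorem mul'_map_antipode_id_comul :
    LinearMap.mul' k 𝐔 ∘ₗ map (antipode k n β q qi hq) LinearMap.id ∘ₗ
        (comul k n β q qi hq).toLinearMap =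
      Algebra.linearMap k 𝐔 ∘ₗ (counit k n β q qi).toLinearMap := by
  refine LinearMap.ext fun x => ?_
  induction x using induction_on with
  | algebraMap r => simp [Algebra.TensorProduct.algebraMap_apply]
  | gen x =>
    rcases x with ⟨i, t, _ | _⟩ | i | i
    · simp [comulOnGen, counitOnGen, antipodeOnGen, gen_tor_inv_mul]
    · simp [comulOnGen, counitOnGen, antipodeOnGen, gen_tor_mul_inv]
    · simpa [comulOnGen, counitOnGen] using
        mul'_map_left_tmul_add_one_tmul (antipode_one hq) (antipode_gen hq (.e i))
          (gen_tor_inv_mul i false)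
    · simp [comulOnGen, counitOnGen, antipodeOnGen]
  | add a b ha hb => simp_all
  | mul a b ha hb =>
    simp only [LinearMap.coe_comp, Function.comp_apply, AlgHom.toLinearMap_apply,
      map_mul] at ha hb ⊢
    rw [mul'_map_left_mul_of_eq_algebraMap (antipode_mul hq) ha, hb]
    simp [Algebra.smul_def]

theorem mul'_map_id_antipode_comul :
    LinearMap.mul' k 𝐔 ∘ₗ map LinearMap.id (antipode k n β q qi hq) ∘ₗ
        (comul k n β q qi hq).toLinearMap =
      Algebra.linearMap k 𝐔 ∘ₗ (counit k n β q qi).toLinearMap := by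
  refine LinearMap.ext fun x => ?_
  induction x using induction_on with
  | algebraMap r => simp [Algebra.TensorProduct.algebraMap_apply]
  | gen x =>
    rcases x with ⟨i, t, _ | _⟩ | i | i
    · simp [comulOnGen, counitOnGen, antipodeOnGen, gen_tor_mul_inv]
    · simp [comulOnGen, counitOnGen, antipodeOnGen, gen_tor_inv_mul]
    · simp [comulOnGen, counitOnGen, antipodeOnGen]
    · simpa [comulOnGen, counitOnGen] using
        mul'_map_right_tmul_one_add_tmul (antipode_one hq) (antipode_gen hq (.f i))
          (gen_tor_inv_mul i true)
  | add a b ha hb => simp_all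
  | mul a b ha hb =>
    simp only [LinearMap.coe_comp, Function.comp_apply, AlgHom.toLinearMap_apply,
      map_mul] at ha hb ⊢
    rw [mul'_map_right_mul_of_eq_algebraMap (antipode_mul hq) hb, ha]
    simpa [Algebra.smul_def] using Algebra.commutes _ _

end Laws

theorem isHopfStructure (hq : q ≠ 0) :
    IsHopfStructure k n β q qi (comul k n β q qi hq) (counit k n β q qi)
      (antipode k n β q qi hq) :=
  ⟨comul_coassoc hq,
    by rw [map_counit_comp_comul hq]; exact AlgEquiv.comp_symm _,
    by rw [map_id_counit_comp_comul hq]; exact AlgEquiv.comp_symm _,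
    mul'_map_antipode_id_comul hq, mul'_map_id_antipode_comul hq,
    fun i => comul_gen hq (.tor i false false), fun i => comul_gen hq (.tor i false true),
    fun i => comul_gen hq (.tor i true false), fun i => comul_gen hq (.tor i true true),
    fun i => comul_gen hq (.e i), fun i => comul_gen hq (.f i),
    fun i => counit_gen (.tor i false false), fun i => counit_gen (.tor i false true),
    fun i => counit_gen (.tor i true false), fun i => counit_gen (.tor i true true),
    fun i => counit_gen (.e i), fun i => counit_gen (.f i),
    fun i => antipode_gen hq (.tor i false false), fun i => antipode_gen hq (.tor i false true),
    fun i => antipode_gen hq (.tor i true false), fun i => antipode_gen hq (.tor i true true),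
    fun i => antipode_gen hq (.e i), fun i => antipode_gen hq (.f i)⟩

theorem existsUnique_hopf_structure_general (k : Type) [Field k] (n : ℕ)
    (β : Matrix (Fin n) (Fin n) ℤ) (q : k) (qi : Fin n → k)
    (hq : q ≠ 0) :
    ∃! t : (Ub k n β q qi →ₐ[k] Ub k n β q qi ⊗[k] Ub k n β q qi) ×
        (Ub k n β q qi →ₐ[k] k) × (Ub k n β q qi →ₗ[k] Ub k n β q qi),
      IsHopfStructure k n β q qi t.1 t.2.1 t.2.2 := by
  refine ⟨⟨comul k n β q qi hq, counit k n β q qi, antipode k n β q qi hq⟩,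
    isHopfStructure hq, ?_⟩
  rintro ⟨Δ, ε, S⟩
    ⟨-, -, -, hS, -, hK, hKinv, hKt, hKtinv, he, hf, εK, εKinv, εKt, εKtinv, εe, εf, -⟩
  obtain rfl : Δ = comul k n β q qi hq := algHom_ext fun x => by
    rcases x with ⟨i, _ | _, _ | _⟩ | i | i <;> rw [comul_gen]
    exacts [hK i, hKinv i, hKt i, hKtinv i, he i, hf i]
  obtain rfl : ε = counit k n β q qi := algHom_ext fun x => by
    rcases x with ⟨i, _ | _, _ | _⟩ | i | i <;> rw [counit_gen]
    exacts [εK i, εKinv i, εKt i, εKtinv i, εe i, εf i]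
  let _ := bialgebra k n β q qi hq
  obtain rfl : S = antipode k n β q qi hq :=
    Bialgebra.antipode_unique hS (mul'_map_id_antipode_comul hq)
  rfl

/-- the double-bosonisation `U(β) = k⟨f⟩ ⋊ U_q(β) ⋉ k⟨e⟩` of the
free braided groups admits a unique Hopf algebra structure in which all the
`K_i, K̃_i` are group-like, `Δe_i = e_i ⊗ K_i + 1 ⊗ e_i`,
`Δf_i = f_i ⊗ 1 + K̃_i⁻¹ ⊗ f_i`, with the stated counit and antipode values. -/
theorem existsUnique_hopf_structure (k : Type) [Field k] (n : ℕ)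
    (β : Matrix (Fin n) (Fin n) ℤ) (q : k) (qi : Fin n → k)
    (hq : q ≠ 0) (hqi : ∀ i, qi i ≠ 0) (hqi' : ∀ i, qi i - (qi i)⁻¹ ≠ 0) :
    ∃! t : (Ub k n β q qi →ₐ[k] Ub k n β q qi ⊗[k] Ub k n β q qi) ×
        (Ub k n β q qi →ₐ[k] k) × (Ub k n β q qi →ₗ[k] Ub k n β q qi),
      IsHopfStructure k n β q qi t.1 t.2.1 t.2.2 :=
  existsUnique_hopf_structure_general k n β q qi hq

end FreeDoubleBos
end
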